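/- arXiv:0712.4118 — 10 statements merged into one kernel-verified Lean document; each statement's English description precedes it below -/
import Mathlib

section
/- A graph G is chordal if and only if there exists an ordering ν on its vertex set (a bijection to {1,...,|V|}) such that for any three vertices u, v, w with ν(u) < ν(w) and ν(v) < ν(w), if uw and vw are both edges then uv is an edge. -/
open SimpleGraph

/-- A graph is chordal if it has no induced cycle of length at least four. -/
def IsChordal {V : Type*} (G : SimpleGraph V) : Prop :=
  ∀ n : ℕ, 4 ≤ n → ∀ f : Fin n → V, Function.Injective f →
    ¬ (∀ i j : Fin n, G.Adj (f i) (f j) ↔ (j.val = (i.val + 1) % n ∨ i.val = (j.val + 1) % n))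

/-- Perfect elimination ordering. -/
def IsPEO {V : Type*} {n : ℕ} (H : SimpleGraph V) (ν : V ≃ Fin n) : Prop :=
  ∀ u v w : V, u ≠ v → ν u < ν w → ν v < ν w → H.Adj u w → H.Adj v w → H.Adj u v

/-- The two edge sets of a signed graph are disjoint (a partition of the edge set). -/
def SDisjoint {V : Type*} (G : Bool → SimpleGraph V) : Prop :=
  ∀ u v : V, ¬ ((G true).Adj u v ∧ (G false).Adj u v)

/-- Signed elimination ordering: conditions (E1) and (E2). -/
def IsSEO {V : Type*} {n : ℕ} (G : Bool → SimpleGraph V) (ν : V ≃ Fin n) : Prop :=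
  ∀ u v w : V, u ≠ v → ν u < ν w → ν v < ν w → ∀ σ : Bool,
    ((G σ).Adj u w → (G σ).Adj v w → (G σ).Adj u v) ∧
    ((G σ).Adj u v → (G (!σ)).Adj v w → (G σ).Adj u w)

/-- A signed graph is signed-eliminable if it admits a signed elimination ordering. -/
def SignedEliminable {V : Type*} (G : Bool → SimpleGraph V) : Prop :=
  ∃ (n : ℕ) (ν : V ≃ Fin n), IsSEO G ν

/-- Signed-simplicial vertex: conditions (S1) and (S2). -/
def SignedSimplicial {V : Type*} (G : Bool → SimpleGraph V) (v : V) : Prop :=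
  (∀ σ : Bool, (G σ).IsClique (insert v ((G σ).neighborSet v))) ∧
  (∀ σ : Bool, ∀ u w : V, (G (!σ)).Adj u w → (G σ).Adj w v → (G (!σ)).Adj u v)

/-!
A perfect elimination ordering leaves no room for an induced cycle of length at least four:
the vertex of the cycle that comes last has two non-adjacent earlier neighbours.

Conversely, a chordal graph has a simplicial vertex; putting it last and recursing on the
remaining vertices gives a perfect elimination ordering. To find a simplicial vertex of a vertex
set `T` outside a clique `K`, take a non-universal vertex `a` of `T` adjacent to all of `K ∩ T`,
a component `C` of `T` minus the closed neighbourhood of `a`, and the set `S` of neighbours of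
`a` adjacent to `C`. Two non-adjacent vertices of `S` would close, through `a` and a shortest
path across `C`, an induced cycle of length at least four; so `S` is a clique, and a vertex of
`C ∪ S` outside `S` that is simplicial there, found by induction, is simplicial in `T`.
-/

theorem Nat.add_one_mod_eq_ite {i n : ℕ} (h : i < n) :
    (i + 1) % n = if i + 1 = n then 0 else i + 1 := by
  split_ifs with h'
  · simp [h']
  · exact Nat.mod_eq_of_lt (by omega)

theorem Nat.eq_add_one_mod_or_iff {i j n : ℕ} (hi : i < n) (hj : j < n) :
    (j = (i + 1) % n ∨ i = (j + 1) % n) ↔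
      (j = i + 1 ∨ i = j + 1 ∨ (i = 0 ∧ j + 1 = n) ∨ (j = 0 ∧ i + 1 = n)) := by
  rw [Nat.add_one_mod_eq_ite hi, Nat.add_one_mod_eq_ite hj]
  split_ifs <;> omega

namespace SimpleGraph.Walk

variable {V : Type*} {G : SimpleGraph V} {u v : V}

theorem dist_getVert_getVert_of_length_eq_dist {p : G.Walk u v} (hp : p.length = G.dist u v)
    {i j : ℕ} (hij : i ≤ j) (hj : j ≤ p.length) :
    G.dist (p.getVert i) (p.getVert j) = j - i := by
  have hend : (p.drop i).getVert (j - i) = p.getVert j := by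
    rw [drop_getVert]; congr 1; omega
  have hsub :=
    (((p.drop i).isSubwalk_take (j - i)).trans (p.isSubwalk_drop i)).copy rfl hend rfl rfl
  rw [copy_rfl_rfl] at hsub
  rw [← length_eq_dist_of_subwalk hp hsub, length_copy, take_length, drop_length]
  omega

theorem adj_getVert_iff_of_length_eq_dist {p : G.Walk u v} (hp : p.length = G.dist u v)
    {i j : ℕ} (hi : i ≤ p.length) (hj : j ≤ p.length) :
    G.Adj (p.getVert i) (p.getVert j) ↔ i + 1 = j ∨ j + 1 = i := by
  constructor
  · intro h
    rcases le_total i j with hij | hji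
    · have := dist_getVert_getVert_of_length_eq_dist hp hij hj
      rw [dist_eq_one_iff_adj.2 h] at this
      omega
    · have := dist_getVert_getVert_of_length_eq_dist hp hji hi
      rw [dist_eq_one_iff_adj.2 h.symm] at this
      omega
  · rintro (rfl | rfl)
    · exact p.adj_getVert_succ (by omega)
    · exact (p.adj_getVert_succ (by omega)).symm

end SimpleGraph.Walk

namespace SimpleGraph

variable {V : Type*} {G : SimpleGraph V}

theorem spanningCoe_induce_adj {s : Set V} {x y : V} :
    (G.induce s).spanningCoe.Adj x y ↔ G.Adj x y ∧ x ∈ s ∧ y ∈ s := by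
  simp

theorem spanningCoe_induce_mono {s t : Set V} (h : s ⊆ t) :
    (G.induce s).spanningCoe ≤ (G.induce t).spanningCoe := fun _ _ hxy => by
  rw [spanningCoe_induce_adj] at hxy ⊢
  exact ⟨hxy.1, h hxy.2.1, h hxy.2.2⟩

def IsSimplicialIn (G : SimpleGraph V) (s : Set V) (v : V) : Prop :=
  G.IsClique (s ∩ G.neighborSet v)

end SimpleGraph

section Chordal

variable {V : Type*} {G : SimpleGraph V}

theorem IsChordal.comap {W : Type*} (hG : IsChordal G) {f : W → V} (hf : Function.Injective f) :
    IsChordal (G.comap f) :=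
  fun n hn g hg => hG n hn (f ∘ g) (hf.comp hg)

theorem not_isChordal_of_path_of_apex {a : V} {p : ℕ → V} {ℓ : ℕ} (hℓ : 2 ≤ ℓ)
    (hinj : Set.InjOn p (Set.Iic ℓ))
    (hpath : ∀ i ≤ ℓ, ∀ j ≤ ℓ, G.Adj (p i) (p j) ↔ i + 1 = j ∨ j + 1 = i)
    (hne : ∀ i ≤ ℓ, p i ≠ a) (hapex : ∀ i ≤ ℓ, G.Adj (p i) a ↔ i = 0 ∨ i = ℓ) :
    ¬ IsChordal G := by
  intro hG
  refine hG (ℓ + 2) (by omega) (fun i => if i.val ≤ ℓ then p i else a) ?_ fun i j => ?_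
  · intro i j hij
    ext
    dsimp only at hij
    split_ifs at hij with hi hj hj
    · exact hinj hi hj hij
    · exact absurd hij (hne _ hi)
    · exact absurd hij.symm (hne _ hj)
    · omega
  · rw [Nat.eq_add_one_mod_or_iff i.isLt j.isLt]
    split_ifs with hi hj hj
    · rw [hpath _ hi _ hj]; omega
    · rw [hapex _ hi]; omega
    · rw [G.adj_comm, hapex _ hj]; omega
    · simp only [SimpleGraph.irrefl, false_iff]; omega

theorem IsChordal.adj_of_reachable_avoiding_closedNbhd (hG : IsChordal G) {a u v : V}
    (hu : G.Adj a u) (hv : G.Adj a v) (huv : u ≠ v)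
    (h : (G.induce ({u, v} ∪ {x | x ≠ a ∧ ¬ G.Adj a x})).spanningCoe.Reachable u v) :
    G.Adj u v := by
  set W : Set V := {u, v} ∪ {x | x ≠ a ∧ ¬ G.Adj a x}
  by_contra hnadj
  obtain ⟨p, hp⟩ := h.exists_walk_length_eq_dist
  have hℓ : 2 ≤ p.length := by
    have h0 : p.length ≠ 0 := fun h0 => huv (p.eq_of_length_eq_zero h0)
    have h1 : p.length ≠ 1 := fun h1 =>
      hnadj (spanningCoe_induce_adj.1 (dist_eq_one_iff_adj.1 (hp ▸ h1))).1
    omega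
  have hinj := (p.isPath_of_length_eq_dist hp).getVert_injOn
  have hmem : ∀ i ≤ p.length, p.getVert i ∈ W := by
    intro i hi
    rcases hi.lt_or_eq with hi | rfl
    · exact (spanningCoe_induce_adj.1 (p.adj_getVert_succ hi)).2.1
    · simp [W]
  have hinterior : ∀ i, 0 < i → i < p.length → p.getVert i ≠ a ∧ ¬ G.Adj a (p.getVert i) := by
    intro i hi0 hiℓ
    have hiu : p.getVert i ≠ u := fun hiu =>
      hi0.ne' (hinj (by simp; omega) (by simp) (hiu.trans p.getVert_zero.symm))
    have hiv : p.getVert i ≠ v := fun hiv =>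
      hiℓ.ne (hinj (by simp; omega) (by simp) (hiv.trans p.getVert_length.symm))
    simpa [W, hiu, hiv] using hmem i hiℓ.le
  have hcases : ∀ i ≤ p.length, i = 0 ∨ i = p.length ∨ 0 < i ∧ i < p.length := by omega
  refine not_isChordal_of_path_of_apex (a := a) hℓ hinj (fun i hi j hj => ?_) (fun i hi => ?_)
    (fun i hi => ?_) hG
  · rw [← p.adj_getVert_iff_of_length_eq_dist hp hi hj, spanningCoe_induce_adj]
    simp [hmem i hi, hmem j hj]
  · rcases hcases i hi with rfl | rfl | hi'
    · simpa using hu.ne'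
    · simpa using hv.ne'
    · exact (hinterior i hi'.1 hi'.2).1
  · rcases hcases i hi with rfl | rfl | hi'
    · simpa using hu.symm
    · simpa using hv.symm
    · simpa [G.adj_comm, hi'.1.ne', hi'.2.ne] using (hinterior i hi'.1 hi'.2).2

theorem IsChordal.exists_isSimplicialIn_outside_closedNbhd (hG : IsChordal G) (T : Finset V)
    (ih : ∀ T' ⊂ T, ∀ K : Set V, G.IsClique K → (∃ b ∈ T', b ∉ K) →
      ∃ v ∈ T', v ∉ K ∧ G.IsSimplicialIn T' v)
    {a b : V} (ha : a ∈ T) (hb : b ∈ T) (hab : a ≠ b) (hnadj : ¬ G.Adj a b) :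
    ∃ v ∈ T, v ≠ a ∧ ¬ G.Adj a v ∧ G.IsSimplicialIn T v := by
  classical
  set R : Set V := {x | x ∈ T ∧ x ≠ a ∧ ¬ G.Adj a x}
  set C : Set V := {x | x ∈ R ∧ (G.induce R).spanningCoe.Reachable b x}
  set S : Set V := {s | s ∈ T ∧ G.Adj a s ∧ ∃ c ∈ C, G.Adj s c}
  have hbC : b ∈ C := ⟨⟨hb, hab.symm, hnadj⟩, .rfl⟩
  have hS : G.IsClique S := by
    rintro s ⟨-, has, c, hc, hsc⟩ t ⟨-, hat, d, hd, htd⟩ hst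
    refine hG.adj_of_reachable_avoiding_closedNbhd has hat hst ?_
    set H := (G.induce ({s, t} ∪ {x | x ≠ a ∧ ¬ G.Adj a x})).spanningCoe
    have hRH : (G.induce R).spanningCoe ≤ H := spanningCoe_induce_mono fun x hx => Or.inr hx.2
    have hsc' : H.Adj s c := spanningCoe_induce_adj.2 ⟨hsc, by simp, Or.inr hc.1.2⟩
    have hdt' : H.Adj d t := spanningCoe_induce_adj.2 ⟨htd.symm, Or.inr hd.1.2, by simp⟩
    exact hsc'.reachable.trans (((hc.2.mono hRH).symm.trans (hd.2.mono hRH)).trans hdt'.reachable)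
  have hT' : T.filter (· ∈ C ∪ S) ⊂ T := by
    refine Finset.filter_ssubset.2 ⟨a, ha, ?_⟩
    rintro (haC | haS)
    · exact haC.1.2.1 rfl
    · exact G.loopless.irrefl a haS.2.1
  obtain ⟨v, hvT', hvS, hsimp⟩ := ih _ hT' S hS ⟨b, Finset.mem_filter.2 ⟨hb, Or.inl hbC⟩,
    fun hbS => hnadj hbS.2.1⟩
  have hvC : v ∈ C := ((Finset.mem_filter.1 hvT').2).resolve_right hvS
  refine ⟨v, hvC.1.1, hvC.1.2.1, hvC.1.2.2, hsimp.subset ?_⟩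
  rintro x ⟨hxT, hvx⟩
  refine ⟨Finset.mem_filter.2 ⟨hxT, ?_⟩, hvx⟩
  by_cases hxR : x ∈ R
  · exact Or.inl ⟨hxR, hvC.2.trans (spanningCoe_induce_adj.2 ⟨hvx, hvC.1, hxR⟩).reachable⟩
  · have hax : G.Adj a x := by
      by_contra hax
      obtain rfl : x = a := by_contra fun hxa => hxR ⟨hxT, hxa, hax⟩
      exact hvC.1.2.2 hvx.symm
    exact Or.inr ⟨hxT, hax, v, hvC, hvx.symm⟩

theorem IsChordal.exists_isSimplicialIn_notMem (hG : IsChordal G) (T : Finset V) {K : Set V}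
    (hK : G.IsClique K) (hKT : ∃ b ∈ T, b ∉ K) : ∃ v ∈ T, v ∉ K ∧ G.IsSimplicialIn T v := by
  induction T using Finset.strongInduction generalizing K with
  | H T ih =>
  by_cases hT : G.IsClique (T : Set V)
  · obtain ⟨b, hbT, hbK⟩ := hKT
    exact ⟨b, hbT, hbK, hT.subset Set.inter_subset_left⟩
  obtain ⟨a, ha, b, hb, hab, hnadj, hKa⟩ : ∃ a ∈ T, ∃ b ∈ T, a ≠ b ∧ ¬ G.Adj a b ∧
      ∀ k ∈ K, k ∈ T → k = a ∨ G.Adj a k := by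
    obtain ⟨x, hx, y, hy, hxy, hnxy⟩ : ∃ x ∈ T, ∃ y ∈ T, x ≠ y ∧ ¬ G.Adj x y := by
      simpa [SimpleGraph.IsClique, Set.Pairwise] using hT
    by_cases hKx : ∀ k ∈ K, k ∈ T → k = x ∨ G.Adj x k
    · exact ⟨x, hx, y, hy, hxy, hnxy, hKx⟩
    push Not at hKx
    obtain ⟨k, hkK, hkT, hkx, hnkx⟩ := hKx
    refine ⟨k, hkT, x, hx, hkx, fun h => hnkx h.symm, fun k' hk' _ => ?_⟩
    exact (eq_or_ne k' k).imp id fun h => hK hkK hk' h.symm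
  obtain ⟨v, hv, hva, hav, hsimp⟩ := hG.exists_isSimplicialIn_outside_closedNbhd T
    (fun T' hT' _ hK' hKT' => ih T' hT' hK' hKT') ha hb hab hnadj
  exact ⟨v, hv, fun hvK => (hKa v hvK hv).elim hva hav, hsimp⟩

theorem IsChordal.exists_isClique_neighborSet [Fintype V] [Nonempty V] (hG : IsChordal G) :
    ∃ v, G.IsClique (G.neighborSet v) := by
  obtain ⟨v, -, -, hv⟩ := hG.exists_isSimplicialIn_notMem Finset.univ
    (K := ∅) (by simp) ⟨Classical.arbitrary V, Finset.mem_univ _, id⟩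
  exact ⟨v, by simpa [SimpleGraph.IsSimplicialIn] using hv⟩

end Chordal

section PerfectEliminationOrdering

variable {V : Type*} {G : SimpleGraph V}

def Equiv.extendLast [DecidableEq V] (v : V) {n : ℕ} (ν : {x // x ≠ v} ≃ Fin n) :
    V ≃ Fin (n + 1) :=
  (Equiv.optionSubtypeNe v).symm.trans (ν.optionCongr.trans finSuccEquivLast.symm)

@[simp]
theorem Equiv.extendLast_self [DecidableEq V] (v : V) {n : ℕ} (ν : {x // x ≠ v} ≃ Fin n) :
    Equiv.extendLast v ν v = Fin.last n := by
  simp [Equiv.extendLast]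

theorem Equiv.extendLast_of_ne [DecidableEq V] {v x : V} (h : x ≠ v) {n : ℕ}
    (ν : {x // x ≠ v} ≃ Fin n) : Equiv.extendLast v ν x = (ν ⟨x, h⟩).castSucc := by
  simp [Equiv.extendLast, h]

theorem IsPEO.extendLast [DecidableEq V] {v : V} {n : ℕ} {ν : {x // x ≠ v} ≃ Fin n}
    (hv : G.IsClique (G.neighborSet v)) (hν : IsPEO (G.comap Subtype.val) ν) :
    IsPEO G (Equiv.extendLast v ν) := by
  intro x y w hxy hxw hyw hxw' hyw'
  by_cases hw : w = v
  · subst hw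
    exact hv hxw'.symm hyw'.symm hxy
  have hne : ∀ {z}, Equiv.extendLast v ν z < Equiv.extendLast v ν w → z ≠ v := by
    intro z hz hzv
    rw [hzv, Equiv.extendLast_self] at hz
    exact hz.not_ge (Fin.le_last _)
  have hx := hne hxw
  have hy := hne hyw
  rw [Equiv.extendLast_of_ne hx, Equiv.extendLast_of_ne hw, Fin.castSucc_lt_castSucc_iff] at hxw
  rw [Equiv.extendLast_of_ne hy, Equiv.extendLast_of_ne hw, Fin.castSucc_lt_castSucc_iff] at hyw
  exact hν ⟨x, hx⟩ ⟨y, hy⟩ ⟨w, hw⟩ (fun h => hxy (congrArg Subtype.val h)) hxw hyw hxw' hyw'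

theorem IsChordal.exists_isPEO_of_card_eq (n : ℕ) :
    ∀ {V : Type*} [Fintype V] {G : SimpleGraph V}, Fintype.card V = n → IsChordal G →
      ∃ ν : V ≃ Fin n, IsPEO G ν := by
  induction n with
  | zero =>
    intro V _ G hV _
    have : IsEmpty V := Fintype.card_eq_zero_iff.1 hV
    exact ⟨Equiv.equivOfIsEmpty V (Fin 0), fun u => isEmptyElim u⟩
  | succ n ih =>
    intro V _ G hV hG
    classical
    have : Nonempty V := Fintype.card_pos_iff.1 (by omega)
    obtain ⟨v, hv⟩ := hG.exists_isClique_neighborSet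
    have hcard : Fintype.card {x // x ≠ v} = n := by
      have := Fintype.card_congr (Equiv.optionSubtypeNe v)
      rw [Fintype.card_option] at this
      omega
    obtain ⟨ν, hν⟩ := ih hcard (hG.comap Subtype.val_injective)
    exact ⟨Equiv.extendLast v ν, hν.extendLast hv⟩

theorem IsPEO.isChordal {n : ℕ} {ν : V ≃ Fin n} (hν : IsPEO G ν) : IsChordal G := by
  intro m hm f hf hcyc
  replace hcyc : ∀ i j : Fin m, G.Adj (f i) (f j) ↔
      (j.val = i + 1 ∨ i.val = j + 1 ∨ (i.val = 0 ∧ j + 1 = m) ∨ (j.val = 0 ∧ i + 1 = m)) :=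
    fun i j => (hcyc i j).trans (Nat.eq_add_one_mod_or_iff i.isLt j.isLt)
  -- `k` is the cycle vertex that comes last in `ν`, and `p`, `s` are its cycle neighbours
  obtain ⟨k, -, hk⟩ :=
    Finset.univ.exists_max_image (fun i => ν (f i)) ⟨⟨0, by omega⟩, Finset.mem_univ _⟩
  have hlt : ∀ i, i ≠ k → ν (f i) < ν (f k) := fun i hi =>
    (hk i (Finset.mem_univ _)).lt_of_ne fun h => hi (hf (ν.injective h))
  obtain ⟨p, hp⟩ : ∃ p : Fin m, p.val + 1 = k ∨ k.val = 0 ∧ p.val + 1 = m :=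
    ⟨⟨if k.val = 0 then m - 1 else k - 1, by split_ifs <;> omega⟩,
      by dsimp only; split_ifs <;> omega⟩
  obtain ⟨s, hs⟩ : ∃ s : Fin m, s.val = k + 1 ∨ k.val + 1 = m ∧ s.val = 0 :=
    ⟨⟨if k.val + 1 = m then 0 else k + 1, by split_ifs <;> omega⟩,
      by dsimp only; split_ifs <;> omega⟩
  have hpk : p ≠ k := by rw [ne_eq, Fin.ext_iff]; omega
  have hsk : s ≠ k := by rw [ne_eq, Fin.ext_iff]; omega
  have hps : p ≠ s := by rw [ne_eq, Fin.ext_iff]; omega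
  have hps' := (hcyc p s).1 (hν _ _ _ (hf.ne hps) (hlt p hpk) (hlt s hsk)
    ((hcyc p k).2 (by omega)) ((hcyc s k).2 (by omega)))
  omega

end PerfectEliminationOrdering

theorem statement_0 {V : Type*} [Fintype V] (G : SimpleGraph V) :
    IsChordal G ↔ ∃ ν : V ≃ Fin (Fintype.card V), IsPEO G ν :=
  ⟨fun hG => hG.exists_isPEO_of_card_eq _ rfl, fun ⟨_, hν⟩ => hν.isChordal⟩
end

section
/- Let G be a chordal graph and V' a clique of G with V' a proper subset of V. Then there exists a vertex v ∈ V \ V' such that the closed neighborhood N_G[v] is a clique of G. -/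
/-!
Dirac's argument, by induction on the number of vertices. If `G` is complete, any vertex
outside `K` is simplicial. Otherwise take non-adjacent `a`, `b`, let `C` be the component of
`b` in `G - N[a]` and `S` the set of neighbours of `C` outside it, so that `S ⊆ N(a)`.
Chordality makes `S` a clique: a shortest path through `C` joining two non-adjacent vertices of
`S` would close an induced cycle through `a`. The clique `K` misses `C` or misses the far side
`(C ∪ S)ᶜ ∋ a`, as no edge joins them. Induction on the graph induced by that side together
with `S`, applied to the clique `S`, gives a vertex of the side that is simplicial there; all
its neighbours lie in the side or in `S`, so it is simplicial in `G`.
-/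

open SimpleGraph

namespace SimpleGraph

variable {V : Type*} {G : SimpleGraph V}

lemma Walk.not_adj_getVert_of_length_eq_dist {u v : V} {p : G.Walk u v}
    (hp : p.length = G.dist u v) {i j : ℕ} (hij : i + 1 < j) (hj : j ≤ p.length) :
    ¬ G.Adj (p.getVert i) (p.getVert j) := fun h => by
  have := G.dist_le (((p.take i).concat h).append (p.drop j))
  simp only [length_append, length_concat, take_length, drop_length] at this
  omega

def IsSimplicial (G : SimpleGraph V) (v : V) : Prop :=
  G.IsClique (insert v (G.neighborSet v))

def HasSimplicialOutsideCliques (G : SimpleGraph V) : Prop :=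
  ∀ K : Set V, G.IsClique K → K ≠ Set.univ → ∃ v, v ∉ K ∧ G.IsSimplicial v

lemma IsSimplicial.of_induce {W : Set V} {v : W} (hv : (G.induce W).IsSimplicial v)
    (hW : ∀ t, G.Adj v t → t ∈ W) : G.IsSimplicial v := by
  have hlift : ∀ t ∈ insert (v : V) (G.neighborSet v),
      ∃ ht : t ∈ W, ⟨t, ht⟩ ∈ insert v ((G.induce W).neighborSet v) := by
    rintro t (rfl | ht)
    · exact ⟨v.2, Set.mem_insert _ _⟩
    · exact ⟨hW t ht, Set.mem_insert_of_mem _ ht⟩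
  intro u hu w hw huw
  obtain ⟨hu, hu'⟩ := hlift u hu
  obtain ⟨hw, hw'⟩ := hlift w hw
  exact hv hu' hw' (fun h => huw (congrArg Subtype.val h))

lemma exists_isSimplicial_mem_of_isClique_boundary {R T : Set V}
    (hind : (G.induce (R ∪ T)).HasSimplicialOutsideCliques) (hR : R.Nonempty)
    (hT : G.IsClique T) (hRT : Disjoint R T) (hbd : ∀ r ∈ R, ∀ t, G.Adj r t → t ∈ R ∪ T) :
    ∃ v ∈ R, G.IsSimplicial v := by
  obtain ⟨r, hr⟩ := hR
  obtain ⟨v, hvT, hv⟩ := hind {w | (w : V) ∈ T}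
    (fun u hu w hw huw => hT hu hw (fun h => huw (Subtype.ext h)))
    ((Set.ne_univ_iff_exists_notMem _).2 ⟨⟨r, Or.inl hr⟩, Set.disjoint_left.1 hRT hr⟩)
  have hvR : (v : V) ∈ R := v.2.resolve_right hvT
  exact ⟨v, hvR, hv.of_induce (hbd v hvR)⟩

end SimpleGraph

namespace IsChordal

variable {V : Type*} {G : SimpleGraph V}

lemma exists_chord (hG : IsChordal G) {n : ℕ} (hn : 4 ≤ n) (g : ℕ → V)
    (hinj : Set.InjOn g (Set.Iio n)) (hcycle : ∀ i, i + 1 < n → G.Adj (g i) (g (i + 1)))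
    (hclose : G.Adj (g (n - 1)) (g 0)) :
    ∃ i j, i + 1 < j ∧ j < n ∧ ¬ (i = 0 ∧ j = n - 1) ∧ G.Adj (g i) (g j) := by
  by_contra! hchord
  have hadj : ∀ i j, i < j → j < n →
      (G.Adj (g i) (g j) ↔ j = (i + 1) % n ∨ i = (j + 1) % n) := by
    intro i j hij hjn
    have hi1 : (i + 1) % n = i + 1 := Nat.mod_eq_of_lt (by omega)
    rcases Nat.lt_or_ge (j + 1) n with hj1 | hj1
    · rw [hi1, Nat.mod_eq_of_lt hj1]
      refine ⟨fun h => ?_, ?_⟩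
      · by_contra hne
        exact hchord i j (by omega) hjn (by omega) h
      · rintro (rfl | h)
        · exact hcycle i (by omega)
        · omega
    · have hj : j = n - 1 := by omega
      rw [hi1, show j + 1 = n by omega, Nat.mod_self]
      subst hj
      refine ⟨fun h => ?_, ?_⟩
      · by_contra hne
        exact hchord i (n - 1) (by omega) hjn (by omega) h
      · rintro (h | rfl)
        · exact h ▸ hcycle i (by omega)
        · exact hclose.symm
  refine hG n hn (fun k => g k) (fun k l h => Fin.ext (hinj k.isLt l.isLt h)) fun k l => ?_
  rcases lt_trichotomy (k : ℕ) l with h | h | h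
  · exact hadj k l h l.isLt
  · rw [Fin.ext h]
    have hsucc : ((l : ℕ) + 1) % n ≠ l := by
      rcases Nat.lt_or_ge ((l : ℕ) + 1) n with h1 | h1
      · rw [Nat.mod_eq_of_lt h1]; omega
      · rw [show (l : ℕ) + 1 = n by omega, Nat.mod_self]; omega
    simp only [SimpleGraph.irrefl, false_iff]
    exact fun h => h.elim (fun h => hsucc h.symm) (fun h => hsucc h.symm)
  · rw [G.adj_comm, or_comm]
    exact hadj l k h k.isLt

lemma lt_two_of_chordless_path_of_apex (hG : IsChordal G) {m : ℕ} (f : ℕ → V) (a : V)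
    (hinj : Set.InjOn f (Set.Iic m)) (hfa : ∀ i ≤ m, f i ≠ a)
    (hpath : ∀ i j, i < j → j ≤ m → (G.Adj (f i) (f j) ↔ j = i + 1))
    (hapex : ∀ i ≤ m, (G.Adj (f i) a ↔ i = 0 ∨ i = m)) : m < 2 := by
  by_contra! hm
  let g : ℕ → V := fun k => if k ≤ m then f k else a
  have hg : ∀ k ≤ m, g k = f k := fun k hk => if_pos hk
  have hg' : g (m + 1) = a := if_neg (by omega)
  have hinjg : Set.InjOn g (Set.Iio (m + 2)) := by
    intro k hk l hl hkl
    simp only [Set.mem_Iio] at hk hl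
    rcases Nat.lt_or_ge m k with hmk | hkm <;> rcases Nat.lt_or_ge m l with hml | hlm
    · omega
    · rw [show k = m + 1 by omega, hg', hg l hlm] at hkl
      exact absurd hkl.symm (hfa l hlm)
    · rw [show l = m + 1 by omega, hg', hg k hkm] at hkl
      exact absurd hkl (hfa k hkm)
    · rw [hg k hkm, hg l hlm] at hkl
      exact hinj (Set.mem_Iic.2 hkm) (Set.mem_Iic.2 hlm) hkl
  obtain ⟨i, j, hij, hj, hnot, hadj⟩ := hG.exists_chord (by omega) g hinjg
    (fun k hk => by
      rcases Nat.lt_or_ge (k + 1) (m + 1) with h | h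
      · rw [hg k (by omega), hg (k + 1) (by omega)]
        exact (hpath k (k + 1) (by omega) (by omega)).2 rfl
      · rw [show k = m by omega, hg m le_rfl, hg']
        exact (hapex m le_rfl).2 (Or.inr rfl))
    (by
      rw [show m + 2 - 1 = m + 1 by omega, hg', hg 0 (Nat.zero_le _)]
      exact ((hapex 0 (Nat.zero_le _)).2 (Or.inl rfl)).symm)
  rcases Nat.lt_or_ge m j with hmj | hjm
  · rw [hg i (by omega), show j = m + 1 by omega, hg'] at hadj
    have := (hapex i (by omega)).1 hadj
    omega
  · rw [hg i (by omega), hg j hjm] at hadj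
    have := (hpath i j (by omega) hjm).1 hadj
    omega

theorem adj_of_reachable_avoiding_closedNbhd_s1 (hG : IsChordal G) {a x y : V}
    (hx : G.Adj a x) (hy : G.Adj a y) (hxy : x ≠ y)
    (hreach : (G.induce (insert x (insert y (insert a (G.neighborSet a))ᶜ))).Reachable
      ⟨x, by simp⟩ ⟨y, by simp⟩) : G.Adj x y := by
  by_contra hnadj
  obtain ⟨p, hp⟩ := hreach.exists_walk_length_eq_dist
  have hpath := p.isPath_of_length_eq_dist hp
  have hlen : 1 < p.length :=
    hp ▸ hreach.one_lt_dist_of_ne_of_not_adj (by simpa using hxy) hnadj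
  have hinterior : ∀ i, 0 < i → i < p.length →
      (p.getVert i : V) ≠ a ∧ ¬ G.Adj a (p.getVert i) := by
    intro i hi0 hil
    have hx' : (p.getVert i : V) ≠ x := fun h => by
      have := (hpath.getVert_eq_start_iff hil.le).1 (Subtype.ext h); omega
    have hy' : (p.getVert i : V) ≠ y := fun h => by
      have := (hpath.getVert_eq_end_iff hil.le).1 (Subtype.ext h); omega
    have hmem := (p.getVert i).2
    simp only [Set.mem_insert_iff, Set.mem_compl_iff, mem_neighborSet, not_or] at hmem
    exact (hmem.resolve_left hx').resolve_left hy'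
  refine absurd (hG.lt_two_of_chordless_path_of_apex (fun i => (p.getVert i : V)) a
    (fun i hi j hj h => hpath.getVert_injOn hi hj (Subtype.ext h)) ?_ ?_ ?_) (by omega)
  · intro i hi h
    rcases Nat.eq_zero_or_pos i with rfl | hi0
    · exact hx.ne (by simpa using h.symm)
    rcases Nat.lt_or_ge i p.length with hil | hil
    · exact (hinterior i hi0 hil).1 h
    · rw [show i = p.length by omega, p.getVert_length] at h
      exact hy.ne h.symm
  · intro i j hij hj
    refine ⟨fun h => ?_, fun h => h ▸ p.adj_getVert_succ (by omega)⟩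
    by_contra hne
    exact p.not_adj_getVert_of_length_eq_dist hp (by omega) hj h
  · intro i hi
    refine ⟨fun h => ?_, ?_⟩
    · by_contra! hne
      exact (hinterior i (by omega) (by omega)).2 h.symm
    · rintro (rfl | rfl)
      · simpa using hx.symm
      · simpa using hy.symm

theorem exists_isClique_separator (hG : IsChordal G) {a b : V} (hab : a ≠ b)
    (hnadj : ¬ G.Adj a b) :
    ∃ C S : Set V, b ∈ C ∧ a ∉ C ∪ S ∧ Disjoint C S ∧ G.IsClique S ∧
      ∀ c ∈ C, ∀ t, G.Adj c t → t ∈ C ∪ S := by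
  set N := insert a (G.neighborSet a)
  have hb : b ∉ N := by simp [N, hab.symm, hnadj]
  let C : Set V := {c | ∃ hc : c ∉ N, (G.induce Nᶜ).Reachable ⟨b, hb⟩ ⟨c, hc⟩}
  let S : Set V := {s | G.Adj a s ∧ ∃ c ∈ C, G.Adj c s}
  have hCN : ∀ c ∈ C, c ∉ N := fun c hc => hc.1
  have hSN : ∀ s ∈ S, s ∈ N := fun s hs => Set.mem_insert_of_mem _ hs.1
  refine ⟨C, S, ⟨hb, .refl _⟩, ?_, ?_, ?_, ?_⟩
  · rintro (h | h)
    · exact hCN a h (Set.mem_insert _ _)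
    · exact G.irrefl h.1
  · exact Set.disjoint_left.2 fun c hc hcS => hCN c hc (hSN c hcS)
  · rintro x ⟨hax, c₁, hc₁, hxc₁⟩ y ⟨hay, c₂, hc₂, hyc₂⟩ hxy
    refine hG.adj_of_reachable_avoiding_closedNbhd_s1 hax hay hxy ?_
    have hNU : Nᶜ ⊆ insert x (insert y Nᶜ) := fun v hv => by simp [hv]
    have hc₁₂ := (hc₁.2.symm.trans hc₂.2).map (G.induceHomOfLE hNU).toHom
    exact (Adj.reachable (G := G.induce _) (u := ⟨x, by simp⟩) (v := ⟨c₁, hNU hc₁.1⟩)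
      hxc₁.symm).trans <| hc₁₂.trans (Adj.reachable (G := G.induce _) hyc₂)
  · intro c hc t hct
    by_cases ht : t ∈ N
    · rcases Set.mem_insert_iff.1 ht with rfl | hat
      · exact absurd (Set.mem_insert_of_mem _ hct.symm) (hCN c hc)
      · exact Or.inr ⟨hat, c, hc, hct⟩
    · exact Or.inl ⟨ht, hc.2.trans (Adj.reachable (G := G.induce _) hct)⟩

theorem induce (hG : IsChordal G) (W : Set V) : IsChordal (G.induce W) :=
  fun n hn f hf => hG n hn (fun i => f i) (Subtype.val_injective.comp hf)

theorem hasSimplicialOutsideCliques [Finite V] (hG : IsChordal G) :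
    G.HasSimplicialOutsideCliques := by
  induction hn : Nat.card V using Nat.strong_induction_on generalizing V with
  | _ n IH =>
  intro K hK hKV
  by_cases hcomplete : ∀ u w : V, u ≠ w → G.Adj u w
  · obtain ⟨z, hz⟩ := (Set.ne_univ_iff_exists_notMem K).1 hKV
    exact ⟨z, hz, fun u _ w _ huw => hcomplete u w huw⟩
  push Not at hcomplete
  obtain ⟨a, b, hab, hnadj⟩ := hcomplete
  have hsmaller : ∀ W : Set V, ∀ x ∉ W, (G.induce W).HasSimplicialOutsideCliques :=
    fun W x hx => IH _ (hn ▸ Finite.card_subtype_lt hx) (hG.induce W) rfl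
  obtain ⟨C, S, hbC, haCS, hCS, hS, hbd⟩ := hG.exists_isClique_separator hab hnadj
  by_cases hKC : Disjoint K C
  · obtain ⟨v, hvC, hv⟩ := exists_isSimplicial_mem_of_isClique_boundary
      (hsmaller _ a haCS) ⟨b, hbC⟩ hS hCS hbd
    exact ⟨v, Set.disjoint_right.1 hKC hvC, hv⟩
  obtain ⟨k, hkK, hkC⟩ := Set.not_disjoint_iff.1 hKC
  have hbdD : ∀ d ∈ (C ∪ S)ᶜ, ∀ t, G.Adj d t → t ∈ (C ∪ S)ᶜ ∪ S := by
    intro d hd t hdt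
    by_contra ht
    rw [Set.mem_union, Set.mem_compl_iff, not_or, not_not] at ht
    exact hd (hbd t (ht.1.resolve_right ht.2) d hdt.symm)
  have hKD : Disjoint K (C ∪ S)ᶜ := Set.disjoint_left.2 fun k' hk'K hk'D =>
    hk'D (hbd k hkC k' (hK hkK hk'K (fun h => hk'D (Or.inl (h ▸ hkC)))))
  obtain ⟨v, hvD, hv⟩ := exists_isSimplicial_mem_of_isClique_boundary
    (hsmaller _ b (by simp [hbC, Set.disjoint_left.1 hCS hbC])) ⟨a, haCS⟩ hS
    (disjoint_compl_left.mono_right Set.subset_union_right) hbdD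
  exact ⟨v, Set.disjoint_right.1 hKD hvD, hv⟩

end IsChordal

theorem statement_1 {V : Type*} [Fintype V] (G : SimpleGraph V) (hG : IsChordal G)
    (K : Set V) (hK : G.IsClique K) (hKV : K ≠ Set.univ) :
    ∃ v : V, v ∉ K ∧ G.IsClique (insert v (G.neighborSet v)) :=
  hG.hasSimplicialOutsideCliques K hK hKV
end

section
/- Let G be a signed graph, v a signed-simplicial vertex of G, and ν a signed elimination ordering on G \ v. Then the extension of ν to V mapping v to |V| is a signed elimination ordering on G. -/
open SimpleGraph

namespace SignedSimplicial

variable {V : Type*} {G : Bool → SimpleGraph V} {v : V}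

theorem adj_of_adj_of_adj (hv : SignedSimplicial G v) {σ : Bool} {u w : V} (huw : u ≠ w)
    (huv : (G σ).Adj u v) (hwv : (G σ).Adj w v) : (G σ).Adj u w :=
  hv.1 σ (Set.mem_insert_of_mem _ huv.symm) (Set.mem_insert_of_mem _ hwv.symm) huw

theorem adj_of_adj_of_adj_neg (hv : SignedSimplicial G v) {σ : Bool} {u w : V}
    (huw : (G σ).Adj u w) (hwv : (G (!σ)).Adj w v) : (G σ).Adj u v := by
  simpa only [Bool.not_not] using hv.2 (!σ) u w (by rwa [Bool.not_not]) hwv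

end SignedSimplicial

theorem ne_of_lt_of_eq_last {V : Type*} {n : ℕ} {νb : V ≃ Fin (n + 1)} {u v w : V}
    (hlast : νb v = Fin.last n) (huw : νb u < νb w) : u ≠ v := by
  rintro rfl
  exact (hlast ▸ huw).not_ge (Fin.le_last _)

theorem lt_of_castSucc_lt {V : Type*} {n : ℕ} {v : V} {ν : {w : V | w ≠ v} ≃ Fin n}
    {νb : V ≃ Fin (n + 1)} (hcast : ∀ w : {w : V | w ≠ v}, νb w.1 = Fin.castSucc (ν w))
    {u w : {w : V | w ≠ v}} (huw : νb u < νb w) : ν u < ν w := by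
  rwa [hcast, hcast, Fin.castSucc_lt_castSucc_iff] at huw

theorem statement_7_general {V : Type*} {n : ℕ} (G : Bool → SimpleGraph V)
    (v : V) (hv : SignedSimplicial G v)
    (ν : {w : V | w ≠ v} ≃ Fin n)
    (hν : IsSEO (fun σ => SimpleGraph.induce {w : V | w ≠ v} (G σ)) ν)
    (νb : V ≃ Fin (n + 1)) (h1 : νb v = Fin.last n)
    (h2 : ∀ w : {w : V | w ≠ v}, νb w.1 = Fin.castSucc (ν w)) :
    IsSEO G νb := by
  intro a b c hab hac hbc σ
  have ha : a ≠ v := ne_of_lt_of_eq_last h1 hac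
  have hb : b ≠ v := ne_of_lt_of_eq_last h1 hbc
  -- A triple topped by `v` is handled by (S1)/(S2); any other lives in `G \ v`.
  by_cases hc : c = v
  · subst hc
    exact ⟨hv.adj_of_adj_of_adj hab, hv.adj_of_adj_of_adj_neg⟩
  · exact hν ⟨a, ha⟩ ⟨b, hb⟩ ⟨c, hc⟩ (fun h => hab (congrArg Subtype.val h))
      (lt_of_castSucc_lt h2 hac) (lt_of_castSucc_lt h2 hbc) σ

theorem statement_7 {V : Type*} {n : ℕ} (G : Bool → SimpleGraph V) (hdisj : SDisjoint G)
    (v : V) (hv : SignedSimplicial G v)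
    (ν : {w : V | w ≠ v} ≃ Fin n)
    (hν : IsSEO (fun σ => SimpleGraph.induce {w : V | w ≠ v} (G σ)) ν)
    (νb : V ≃ Fin (n + 1)) (h1 : νb v = Fin.last n)
    (h2 : ∀ w : {w : V | w ≠ v}, νb w.1 = Fin.castSucc (ν w)) :
    IsSEO G νb :=
  statement_7_general G v hv ν hν νb h1 h2
end

section
/- Let G be a signed-eliminable signed graph and v any signed-simplicial vertex of G. Then there exists a signed elimination ordering ν on G with ν(v) = |V|. -/
open SimpleGraph

/-! Take any SEO and move `v` to the end. Triples with last vertex `v` satisfy (E1) and (E2)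
by (S1) and (S2); every other triple keeps its relative order, so it is covered by the
original SEO. -/

section

variable {V : Type*}

lemma exists_equiv_fin_lt_iff [Fintype V] {α : Type*} [LinearOrder α] (f : V → α)
    (hf : Function.Injective f) :
    ∃ μ : V ≃ Fin (Fintype.card V), ∀ x y, μ x < μ y ↔ f x < f y := by
  let : LinearOrder V := LinearOrder.lift' f hf
  let e := (Fintype.orderIsoFinOfCardEq V rfl).symm
  exact ⟨e.toEquiv, fun x y => e.lt_iff_lt⟩

lemma SignedSimplicial.isSEO_apex {G : Bool → SimpleGraph V} {v : V} (hv : SignedSimplicial G v)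
    {u u' : V} (huu' : u ≠ u') (σ : Bool) :
    ((G σ).Adj u v → (G σ).Adj u' v → (G σ).Adj u u') ∧
    ((G σ).Adj u u' → (G (!σ)).Adj u' v → (G σ).Adj u v) := by
  refine ⟨fun hu hu' => hv.1 σ (Set.mem_insert_of_mem _ hu.symm)
    (Set.mem_insert_of_mem _ hu'.symm) huu', fun huu'σ hu'v => ?_⟩
  simpa using hv.2 (!σ) u u' (by simpa using huu'σ) hu'v

lemma exists_equiv_fin_move_to_last {n : ℕ} [Fintype V] (ν : V ≃ Fin n) (v : V) :
    ∃ μ : V ≃ Fin (Fintype.card V),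
      (∀ u w, w ≠ v → μ u < μ w → ν u < ν w) ∧ ∀ w, μ w ≤ μ v := by
  classical
  -- `v` is ranked above all of `Fin n`, the other vertices keep their `ν`-order
  let key : V → ℕ := fun x => if x = v then n else ν x
  have hkey : Function.Injective key := by
    intro x y hxy
    have := (ν x).isLt; have := (ν y).isLt
    by_cases hx : x = v <;> by_cases hy : y = v <;> simp only [key, hx, hy, if_true, if_false] at hxy
    · exact hx.trans hy.symm
    all_goals first | omega | exact ν.injective (Fin.ext hxy)
  obtain ⟨μ, hμ⟩ := exists_equiv_fin_lt_iff key hkey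
  refine ⟨μ, fun u w hw huw => ?_, fun w => not_lt.1 fun hvw => ?_⟩
  · have := (ν w).isLt
    rw [hμ] at huw
    by_cases hu : u = v <;> simp only [key, hu, hw, if_true, if_false] at huw
    · omega
    · exact huw
  · have := (ν w).isLt
    rw [hμ] at hvw
    by_cases hw : w = v <;> simp only [key, hw, if_true, if_false] at hvw <;> omega

lemma IsSEO.of_signedSimplicial {G : Bool → SimpleGraph V} {n m : ℕ} {ν : V ≃ Fin n}
    {μ : V ≃ Fin m} (hν : IsSEO G ν) {v : V} (hv : SignedSimplicial G v)
    (hμ : ∀ u w, w ≠ v → μ u < μ w → ν u < ν w) : IsSEO G μ := by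
  intro u u' w huu' hu hu' σ
  by_cases hw : w = v
  · subst hw
    exact hv.isSEO_apex huu' σ
  · exact hν u u' w huu' (hμ u w hw hu) (hμ u' w hw hu') σ

end

theorem statement_8_general {V : Type*} [Fintype V] (G : Bool → SimpleGraph V)
    (hSE : SignedEliminable G) (v : V) (hv : SignedSimplicial G v) :
    ∃ ν : V ≃ Fin (Fintype.card V), IsSEO G ν ∧ ∀ w : V, ν w ≤ ν v := by
  obtain ⟨n, ν, hν⟩ := hSE
  obtain ⟨μ, hμν, hμv⟩ := exists_equiv_fin_move_to_last ν v
  exact ⟨μ, hν.of_signedSimplicial hv hμν, hμv⟩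

theorem statement_8 {V : Type*} [Fintype V] (G : Bool → SimpleGraph V) (hdisj : SDisjoint G)
    (hSE : SignedEliminable G) (v : V) (hv : SignedSimplicial G v) :
    ∃ ν : V ≃ Fin (Fintype.card V), IsSEO G ν ∧ ∀ w : V, ν w ≤ ν v :=
  statement_8_general G hSE v hv
end

section
/- For any signed-eliminable signed graph G, the multiset d^(ν) consisting of the pairs d^(ν)(i) = (d^(ν)_+(i), d^(ν)_-(i)) for 1 ≤ i ≤ |V|, where d^(ν)_σ(i) = |{v : ν(v) ≤ i and ν^{-1}(i) ~_σ v}|, does not depend on the choice of signed elimination ordering ν on G. -/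
/-!
Let `z` be the last vertex of the elimination ordering `μ`; the elimination conditions with
`w = z` make `z` signed-simplicial. Take any other elimination ordering `ν` and let
`y₁ < ⋯ < y_k` be the neighbours of `z` ranked after `z` by `ν`. By simpliciality of `z` and
the conditions at `y_j`, a vertex ranked before `y_j` is a `σ`-neighbour of `y_j` iff it is a
`σ`-neighbour of `z`. Hence the pair of `y_j` in `G` equals the pair of `y_{j+1}` in `G - z`,
the pair of `z` equals that of `y₁` in `G - z`, and the pair of `y_k` is the full signed degree
of `z`, while no other pair changes. So for every elimination ordering `d^(ν)(G)` is
`d^(ν)(G - z)` plus the signed degree of `z`, and induction on the vertex set concludes.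
-/

open SimpleGraph

open Finset

theorem Nat.eq_of_forall_succ_eq {α : Type*} {f : ℕ → α} {m n : ℕ} (hmn : m ≤ n)
    (h : ∀ k, m ≤ k → k < n → f (k + 1) = f k) : f n = f m := by
  induction n, hmn using Nat.le_induction with
  | base => rfl
  | succ n hmn ih =>
    rw [h n hmn n.lt_succ_self, ih fun k hmk hkn => h k hmk (hkn.trans n.lt_succ_self)]

/-- Telescoping: `f` only changes at the points of `A`, so shifting each of them by one
trades `f (a + 1)` for `f N`. -/
theorem Multiset.map_add_one_add_singleton {α : Type*} (f : ℕ → α) {A : Finset ℕ}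
    {a N : ℕ} (hA : ∀ b ∈ A, a < b ∧ b < N) (haN : a < N)
    (hf : ∀ k, a < k → k < N → k ∉ A → f (k + 1) = f k) :
    A.val.map (fun b => f (b + 1)) + {f (a + 1)} = A.val.map f + {f N} := by
  induction A using Finset.induction_on_max generalizing N with
  | empty =>
    simp only [Finset.empty_val, Multiset.map_zero, zero_add]
    exact congrArg _ (Nat.eq_of_forall_succ_eq haN fun k hk hkN => hf k hk hkN
      (Finset.notMem_empty k)).symm
  | insert b A hAb ih =>
    have hb := hA b (mem_insert_self b A)
    have ih := ih (fun c hc => ⟨(hA c (mem_insert_of_mem hc)).1, hAb c hc⟩) hb.1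
      fun k hak hkb hkA => hf k hak (hkb.trans hb.2) fun hk => (mem_insert.1 hk).elim
        (fun h => hkb.ne h) hkA
    have hbN : f N = f (b + 1) := Nat.eq_of_forall_succ_eq hb.2 fun k hbk hkN =>
      hf k (hb.1.trans hbk) hkN fun hk => (mem_insert.1 hk).elim (fun h => by omega)
        fun hkA => (hAb k hkA).not_ge (by omega)
    rw [insert_val_of_notMem fun h => (hAb b h).false, Multiset.map_cons, Multiset.map_cons,
      Multiset.cons_add, ih, Multiset.cons_add, hbN, ← Multiset.singleton_add,
      ← Multiset.singleton_add]
    abel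

namespace SignedGraph

variable {V : Type*}

def signedCard (A : Bool → Finset V) : ℕ × ℕ := (#(A true), #(A false))

theorem signedCard_congr {A B : Bool → Finset V} (h : ∀ σ, #(A σ) = #(B σ)) :
    signedCard A = signedCard B :=
  Prod.ext (h true) (h false)

section Elimination

variable (G : Bool → SimpleGraph V)

def SEOCond (u v w : V) : Prop :=
  ∀ σ : Bool, ((G σ).Adj u w → (G σ).Adj v w → (G σ).Adj u v) ∧
    ((G σ).Adj u v → (G (!σ)).Adj v w → (G σ).Adj u w)

def IsSEOOn (s : Finset V) (r : V → ℕ) : Prop :=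
  ∀ u ∈ s, ∀ v ∈ s, ∀ w ∈ s, u ≠ v → r u < r w → r v < r w → SEOCond G u v w

variable {G}

theorem IsSEOOn.mono {s t : Finset V} {r : V → ℕ} (h : IsSEOOn G s r) (hts : t ⊆ s) :
    IsSEOOn G t r :=
  fun u hu v hv w hw => h u (hts hu) v (hts hv) w (hts hw)

theorem isSEOOn_univ_of_isSEO [Fintype V] {n : ℕ} {ν : V ≃ Fin n} (h : IsSEO G ν) :
    IsSEOOn G univ fun v => (ν v : ℕ) :=
  fun u _ v _ w _ huv hu hv => h u v w huv hu hv

theorem sup_adj_of_adj {σ : Bool} {u v : V} (h : (G σ).Adj u v) :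
    (G true ⊔ G false).Adj u v := by
  cases σ
  · exact Or.inr h
  · exact Or.inl h

theorem adj_or_adj_not_of_sup_adj {u v : V} (h : (G true ⊔ G false).Adj u v) (σ : Bool) :
    (G σ).Adj u v ∨ (G (!σ)).Adj u v := by
  cases σ
  · exact Or.symm h
  · exact h

variable [DecidableEq V] {s : Finset V} {r : V → ℕ} {z : V}

variable (G) in
/-- Conditions (S1) and (S2) of `SignedSimplicial` inside `s`, written as the elimination
conditions with apex `z`. -/
def IsSignedSimplicialIn (s : Finset V) (z : V) : Prop :=
  ∀ u ∈ s.erase z, ∀ v ∈ s.erase z, u ≠ v → SEOCond G u v z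

/-- One direction is the simpliciality of `z`, the other the elimination condition at `y`;
which of (E1), (E2) applies depends on the sign of `zy`. -/
theorem adj_iff_adj_of_later_neighbor (hseo : IsSEOOn G s r) (hz : z ∈ s)
    (hsimp : IsSignedSimplicialIn G s z) {y v : V} (hy : y ∈ s)
    (hzy : (G true ⊔ G false).Adj z y) (hry : r z < r y)
    (hv : v ∈ s.erase z) (hvy : r v < r y) (σ : Bool) :
    (G σ).Adj y v ↔ (G σ).Adj z v := by
  have hy' : y ∈ s.erase z := mem_erase.2 ⟨hzy.ne', hy⟩
  have hyv : y ≠ v := by rintro rfl; exact hvy.false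
  have hseo_y := hseo v (mem_of_mem_erase hv) z hz y hy (ne_of_mem_erase hv) hvy hry σ
  rcases adj_or_adj_not_of_sup_adj hzy σ with h | h
  · exact ⟨fun hyv' => (hseo_y.1 hyv'.symm h).symm,
      fun hzv => (hsimp y hy' v hv hyv σ).1 h.symm hzv.symm⟩
  · exact ⟨fun hyv' => ((hsimp v hv y hy' hyv.symm σ).2 hyv'.symm h.symm).symm,
      fun hzv => (hseo_y.2 hzv.symm h).symm⟩

end Elimination

section Counting

variable (G : Bool → SimpleGraph V) [∀ σ : Bool, DecidableRel (G σ).Adj]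

/-- The pair `d^(r)(x)` of the paper, computed inside `s`. -/
def earlierDeg (s : Finset V) (r : V → ℕ) (x : V) : ℕ × ℕ :=
  signedCard fun σ => {v ∈ s | r v ≤ r x ∧ (G σ).Adj x v}

def degBelow (s : Finset V) (r : V → ℕ) (z : V) (k : ℕ) : ℕ × ℕ :=
  signedCard fun σ => {v ∈ s | (G σ).Adj z v ∧ r v < k}

def signedDeg (s : Finset V) (z : V) : ℕ × ℕ :=
  signedCard fun σ => {v ∈ s | (G σ).Adj z v}

variable {G} {s : Finset V} {r : V → ℕ} {z : V}

theorem earlierDeg_eq_degBelow_add_one : earlierDeg G s r z = degBelow G s r z (r z + 1) :=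
  congrArg signedCard <| funext fun _ => filter_congr fun _ _ => by
    rw [Nat.lt_add_one_iff, and_comm]

theorem degBelow_add_one_of_forall_ne {k : ℕ}
    (hk : ∀ v ∈ s, (G true ⊔ G false).Adj z v → r v ≠ k) :
    degBelow G s r z (k + 1) = degBelow G s r z k :=
  congrArg signedCard <| funext fun _ => filter_congr fun v hv => and_congr_right fun hzv => by
    have := hk v hv (sup_adj_of_adj hzv)
    omega

theorem degBelow_eq_signedDeg {N : ℕ} (hN : ∀ v ∈ s, r v < N) :
    degBelow G s r z N = signedDeg G s z :=
  congrArg signedCard <| funext fun _ => filter_congr fun v hv => and_iff_left (hN v hv)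

theorem map_univ_filter_adj_eq_map_earlierDeg [Fintype V] {n : ℕ} (ν : V ≃ Fin n) :
    (Finset.univ.val.map fun i : Fin n =>
        ((Finset.univ.filter fun v : V => ν v ≤ i ∧ (G true).Adj (ν.symm i) v).card,
         (Finset.univ.filter fun v : V => ν v ≤ i ∧ (G false).Adj (ν.symm i) v).card)) =
      univ.val.map (earlierDeg G univ fun v => (ν v : ℕ)) := by
  rw [← Multiset.map_univ_val_equiv ν, Multiset.map_map]
  refine Multiset.map_congr rfl fun w _ => ?_
  simp only [Function.comp_apply, Equiv.symm_apply_apply]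
  rfl

variable [DecidableEq V]

theorem earlierDeg_erase_of_not_later {x : V} (hr : r.Injective) (hxz : x ≠ z)
    (hx : ¬ (r z < r x ∧ (G true ⊔ G false).Adj z x)) :
    earlierDeg G (s.erase z) r x = earlierDeg G s r x := by
  refine congrArg signedCard <| funext fun σ => ?_
  rw [filter_erase, erase_eq_of_notMem]
  intro hzx
  rw [mem_filter] at hzx
  exact hx ⟨hzx.2.1.lt_of_ne (hr.ne hxz.symm), sup_adj_of_adj hzx.2.2.symm⟩

section LaterNeighbor

variable (hr : r.Injective) (hseo : IsSEOOn G s r) (hz : z ∈ s)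
  (hsimp : IsSignedSimplicialIn G s z) {y : V} (hy : y ∈ s) (hzy : (G true ⊔ G false).Adj z y)
  (hry : r z < r y)
include hr hseo hz hsimp hy hzy hry

theorem earlierDeg_erase_eq_degBelow :
    earlierDeg G (s.erase z) r y = degBelow G s r z (r y) := by
  refine congrArg signedCard <| funext fun σ => ?_
  ext v
  simp only [mem_filter]
  constructor
  · rintro ⟨hv, hvy, hyv⟩
    have hvy : r v < r y := hvy.lt_of_ne (hr.ne hyv.ne')
    exact ⟨mem_of_mem_erase hv,
      (adj_iff_adj_of_later_neighbor hseo hz hsimp hy hzy hry hv hvy σ).1 hyv, hvy⟩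
  · rintro ⟨hv, hzv, hvy⟩
    have hv : v ∈ s.erase z := mem_erase.2 ⟨hzv.ne', hv⟩
    exact ⟨hv, hvy.le, (adj_iff_adj_of_later_neighbor hseo hz hsimp hy hzy hry hv hvy σ).2 hzv⟩

/-- Swapping `z` and `y` matches the earlier neighbours of `y` with the neighbours of `z`
ranked up to `y`. -/
theorem earlierDeg_eq_degBelow_add_one_of_later :
    earlierDeg G s r y = degBelow G s r z (r y + 1) := by
  refine signedCard_congr fun σ => ?_
  rw [← card_map (Equiv.swap z y).toEmbedding]
  congr 1
  ext v
  rw [mem_map_equiv, Equiv.symm_swap]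
  simp only [mem_filter]
  rcases eq_or_ne v z with rfl | hvz
  · simp
  rcases eq_or_ne v y with rfl | hvy
  · simp [hz, hy, hry.le, (G σ).adj_comm]
  rw [Equiv.swap_apply_of_ne_of_ne hvz hvy, Nat.lt_add_one_iff, and_comm (a := (G σ).Adj z v)]
  refine and_congr_right fun hv => ?_
  rw [(hr.ne hvy).le_iff_lt]
  exact and_congr_right fun hvy =>
    adj_iff_adj_of_later_neighbor hseo hz hsimp hy hzy hry (mem_erase.2 ⟨hvz, hv⟩) hvy σ

end LaterNeighbor

theorem map_earlierDeg_eq_map_erase_add (hr : r.Injective) (hseo : IsSEOOn G s r) (hz : z ∈ s)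
    (hsimp : IsSignedSimplicialIn G s z) :
    s.val.map (earlierDeg G s r) =
      (s.erase z).val.map (earlierDeg G (s.erase z) r) + {signedDeg G s z} := by
  set later : V → Prop := fun x => r z < r x ∧ (G true ⊔ G false).Adj z x
  set L := (s.erase z).filter later
  set R := (s.erase z).filter (¬ later ·)
  have hsplit (g : V → ℕ × ℕ) : (s.erase z).val.map g = L.val.map g + R.val.map g := by
    rw [filter_val, filter_val, ← Multiset.map_add, Multiset.filter_add_not]
  have hL {y : V} (hy : y ∈ L.val) : y ∈ s ∧ (G true ⊔ G false).Adj z y ∧ r z < r y := by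
    obtain ⟨hy, hry, hzy⟩ := mem_filter.1 hy
    exact ⟨mem_of_mem_erase hy, hzy, hry⟩
  have hN : ∀ v ∈ s, r v < s.sup r + 1 := fun v hv => Nat.lt_add_one_iff.2 (le_sup hv)
  have htele := Multiset.map_add_one_add_singleton (degBelow G s r z) (A := L.image r)
    (a := r z) (N := s.sup r + 1)
    (fun b hb => by
      obtain ⟨y, hy, rfl⟩ := mem_image.1 hb
      exact ⟨(hL hy).2.2, hN y (hL hy).1⟩)
    (hN z hz)
    (fun k hk _ hkL => degBelow_add_one_of_forall_ne fun v hv hzv hvk => hkL <|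
      mem_image.2 ⟨v, mem_filter.2 ⟨mem_erase.2 ⟨hzv.ne', hv⟩, hvk ▸ hk, hzv⟩, hvk⟩)
  rw [image_val_of_injOn hr.injOn, Multiset.map_map, Multiset.map_map] at htele
  have hLs : L.val.map (earlierDeg G s r) = L.val.map ((fun b => degBelow G s r z (b + 1)) ∘ r) :=
    Multiset.map_congr rfl fun y hy =>
      earlierDeg_eq_degBelow_add_one_of_later hr hseo hz hsimp (hL hy).1 (hL hy).2.1 (hL hy).2.2
  have hLE : L.val.map (earlierDeg G (s.erase z) r) = L.val.map (degBelow G s r z ∘ r) :=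
    Multiset.map_congr rfl fun y hy =>
      earlierDeg_erase_eq_degBelow hr hseo hz hsimp (hL hy).1 (hL hy).2.1 (hL hy).2.2
  have hR : R.val.map (earlierDeg G s r) = R.val.map (earlierDeg G (s.erase z) r) :=
    Multiset.map_congr rfl fun x hx =>
      (earlierDeg_erase_of_not_later hr (ne_of_mem_erase (mem_filter.1 hx).1)
        (mem_filter.1 hx).2).symm
  have hsval : s.val = z ::ₘ (s.erase z).val := by
    rw [erase_val, Multiset.cons_erase hz]
  rw [hsval, Multiset.map_cons, hsplit, hsplit, ← Multiset.singleton_add, hLs, hLE, hR,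
    earlierDeg_eq_degBelow_add_one, ← degBelow_eq_signedDeg hN, add_right_comm, ← htele]
  abel

theorem map_earlierDeg_eq_of_isSEOOn {r q : V → ℕ} (hr : r.Injective) (hq : q.Injective)
    (s : Finset V) (hsr : IsSEOOn G s r) (hsq : IsSEOOn G s q) :
    s.val.map (earlierDeg G s r) = s.val.map (earlierDeg G s q) := by
  induction s using Finset.induction_on_max_value q with
  | empty => rfl
  | insert a s ha hmax ih =>
    have hsimp : IsSignedSimplicialIn G (insert a s) a := by
      rw [IsSignedSimplicialIn, erase_insert ha]
      have hlt (x : V) (hx : x ∈ s) : q x < q a :=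
        (hmax x hx).lt_of_ne (hq.ne (ne_of_mem_of_not_mem hx ha))
      exact fun u hu v hv huv => hsq u (mem_insert_of_mem hu) v (mem_insert_of_mem hv) a
        (mem_insert_self a s) huv (hlt u hu) (hlt v hv)
    rw [map_earlierDeg_eq_map_erase_add hr hsr (mem_insert_self a s) hsimp,
      map_earlierDeg_eq_map_erase_add hq hsq (mem_insert_self a s) hsimp, erase_insert ha,
      ih (hsr.mono (subset_insert a s)) (hsq.mono (subset_insert a s))]

end Counting

end SignedGraph

theorem statement_11 {V : Type*} [Fintype V] [DecidableEq V] (G : Bool → SimpleGraph V)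
    [∀ σ : Bool, DecidableRel (G σ).Adj] (hdisj : SDisjoint G)
    (ν μ : V ≃ Fin (Fintype.card V)) (hν : IsSEO G ν) (hμ : IsSEO G μ) :
    (Finset.univ.val.map fun i : Fin (Fintype.card V) =>
        ((Finset.univ.filter fun v : V => ν v ≤ i ∧ (G true).Adj (ν.symm i) v).card,
         (Finset.univ.filter fun v : V => ν v ≤ i ∧ (G false).Adj (ν.symm i) v).card)) =
    (Finset.univ.val.map fun i : Fin (Fintype.card V) =>
        ((Finset.univ.filter fun v : V => μ v ≤ i ∧ (G true).Adj (μ.symm i) v).card,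
         (Finset.univ.filter fun v : V => μ v ≤ i ∧ (G false).Adj (μ.symm i) v).card)) := by
  rw [SignedGraph.map_univ_filter_adj_eq_map_earlierDeg,
    SignedGraph.map_univ_filter_adj_eq_map_earlierDeg]
  exact SignedGraph.map_earlierDeg_eq_of_isSEOOn (Fin.val_injective.comp ν.injective)
    (Fin.val_injective.comp μ.injective) univ (SignedGraph.isSEOOn_univ_of_isSEO hν)
    (SignedGraph.isSEOOn_univ_of_isSEO hμ)
end

section
/- No σ-mountain is signed-eliminable: for n ≥ 3, the signed graph on vertices v_1,...,v_n, w with edges v_i v_{i+1} ∈ E_{-σ} for 1 ≤ i ≤ n-1, w v_i ∈ E_σ for 2 ≤ i ≤ n-1, and no other edges, admits no signed elimination ordering. -/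
/-!
The vertex of a signed elimination ordering that comes last is signed-simplicial, so it suffices
to check that no vertex of a mountain is. The apex `w` and the two ends `v 0`, `v (n-1)` violate
(S2) along a path edge to an inner vertex, and an inner vertex `v i` violates (S1): its two path
neighbours `v (i-1)` and `v (i+1)` are not adjacent.
-/

open SimpleGraph

section Simplicial

variable {V : Type*} {G : Bool → SimpleGraph V} {N : ℕ} {ν : V ≃ Fin N}

theorem IsSEO.signedSimplicial_of_forall_lt (hseo : IsSEO G ν) (hd : SDisjoint G) {m : V}
    (hm : ∀ x, x ≠ m → ν x < ν m) : SignedSimplicial G m := by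
  refine ⟨fun τ x hx y hy hxy => ?_, fun τ u x hux hxm => ?_⟩
  · rcases hx with rfl | hx <;> rcases hy with rfl | hy
    · exact absurd rfl hxy
    · exact hy
    · exact hx.symm
    · exact (hseo x y m hxy (hm x hx.ne') (hm y hy.ne') τ).1 hx.symm hy.symm
  · have hum : u ≠ m := by
      rintro rfl
      cases τ
      · exact hd x u ⟨hux.symm, hxm⟩
      · exact hd x u ⟨hxm, hux.symm⟩
    simpa using (hseo u x m hux.ne (hm u hum) (hm x hxm.ne) (!τ)).2 hux (by simpa using hxm)

theorem SignedEliminable.exists_signedSimplicial [Nonempty V] (h : SignedEliminable G)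
    (hd : SDisjoint G) : ∃ m, SignedSimplicial G m := by
  obtain ⟨N, ν, hseo⟩ := h
  have hN : 0 < N := (ν (Classical.arbitrary V)).pos
  refine ⟨ν.symm ⟨N - 1, by omega⟩, hseo.signedSimplicial_of_forall_lt hd fun x hx => ?_⟩
  have hne : ν x ≠ ⟨N - 1, by omega⟩ := fun h => hx (ν.eq_symm_apply.2 h)
  rw [Equiv.apply_symm_apply, Fin.lt_def]
  have hval : (ν x).val ≠ N - 1 := Fin.val_ne_of_ne hne
  exact Nat.lt_of_le_of_ne (Nat.le_sub_one_of_lt (ν x).isLt) hval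

theorem SignedSimplicial.adj_of_adj {m a b : V} (h : SignedSimplicial G m) {τ : Bool}
    (ha : (G τ).Adj m a) (hb : (G τ).Adj m b) (hab : a ≠ b) : (G τ).Adj a b :=
  h.1 τ (Set.mem_insert_of_mem _ ha) (Set.mem_insert_of_mem _ hb) hab

end Simplicial

section Mountain

variable {V : Type*} {G : Bool → SimpleGraph V} {σ : Bool} {n : ℕ} {v : Fin n → V} {w : V}

theorem sDisjoint_of_mountain (hsurj : ∀ x : V, x = w ∨ ∃ i : Fin n, x = v i)
    (hvσ : ∀ i j : Fin n, ¬ (G σ).Adj (v i) (v j))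
    (hwm : ∀ i : Fin n, ¬ (G (!σ)).Adj w (v i)) : SDisjoint G := by
  intro a b hab
  have hboth : (G σ).Adj a b ∧ (G (!σ)).Adj a b := by
    cases σ
    · exact ⟨hab.2, hab.1⟩
    · exact hab
  obtain ⟨hσ, hnσ⟩ := hboth
  rcases hsurj a with rfl | ⟨i, rfl⟩ <;> rcases hsurj b with rfl | ⟨j, rfl⟩
  · exact hσ.ne rfl
  · exact hwm j hnσ
  · exact hwm i hnσ.symm
  · exact hvσ i j hσ

theorem not_signedSimplicial_apex (hn : 3 ≤ n)
    (hpath : ∀ i j : Fin n, (G (!σ)).Adj (v i) (v j) ↔ (i.val + 1 = j.val ∨ j.val + 1 = i.val))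
    (hwσ : ∀ i : Fin n, (G σ).Adj w (v i) ↔ (1 ≤ i.val ∧ i.val ≤ n - 2))
    (hwm : ∀ i : Fin n, ¬ (G (!σ)).Adj w (v i)) : ¬ SignedSimplicial G w := by
  intro h
  have h01 : (G (!σ)).Adj (v ⟨0, by omega⟩) (v ⟨1, by omega⟩) := (hpath _ _).2 (Or.inl rfl)
  have h1w : (G σ).Adj (v ⟨1, by omega⟩) w := ((hwσ _).2 ⟨le_rfl, by simp only; omega⟩).symm
  exact hwm _ (h.2 σ _ _ h01 h1w).symm

theorem not_signedSimplicial_of_not_inner (hn : 3 ≤ n)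
    (hpath : ∀ i j : Fin n, (G (!σ)).Adj (v i) (v j) ↔ (i.val + 1 = j.val ∨ j.val + 1 = i.val))
    (hwσ : ∀ i : Fin n, (G σ).Adj w (v i) ↔ (1 ≤ i.val ∧ i.val ≤ n - 2))
    {i : Fin n} (hi : ¬ (1 ≤ i.val ∧ i.val ≤ n - 2)) : ¬ SignedSimplicial G (v i) := by
  intro h
  obtain ⟨j, hij, hj⟩ : ∃ j : Fin n,
      (i.val + 1 = j.val ∨ j.val + 1 = i.val) ∧ 1 ≤ j.val ∧ j.val ≤ n - 2 := by
    by_cases hi0 : i.val = 0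
    · exact ⟨⟨1, by omega⟩, by simp only; omega, by simp only; omega⟩
    · exact ⟨⟨n - 2, by omega⟩, by simp only; omega, by simp only; omega⟩
  have hwj : (G (!!σ)).Adj w (v j) := by simpa using (hwσ j).2 hj
  have hji : (G (!σ)).Adj (v j) (v i) := (hpath _ _).2 hij.symm
  exact hi ((hwσ i).1 (by simpa using h.2 (!σ) w (v j) hwj hji))

theorem not_signedSimplicial_of_inner (hinj : Function.Injective v)
    (hpath : ∀ i j : Fin n, (G (!σ)).Adj (v i) (v j) ↔ (i.val + 1 = j.val ∨ j.val + 1 = i.val))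
    {i : Fin n} (hi : 1 ≤ i.val ∧ i.val ≤ n - 2) : ¬ SignedSimplicial G (v i) := by
  intro h
  let prev : Fin n := ⟨i.val - 1, by omega⟩
  let next : Fin n := ⟨i.val + 1, by omega⟩
  have hne : v prev ≠ v next := fun he => by
    have := Fin.val_eq_of_eq (hinj he)
    simp only [prev, next] at this
    omega
  have hadj := h.adj_of_adj ((hpath i prev).2 (Or.inr (by simp only [prev]; omega)))
    ((hpath i next).2 (Or.inl rfl)) hne
  rw [hpath] at hadj
  simp only [prev, next] at hadj
  omega

end Mountain

theorem statement_12_general {V : Type*} (G : Bool → SimpleGraph V) (σ : Bool)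
    (n : ℕ) (hn : 3 ≤ n) (v : Fin n → V) (w : V)
    (hinj : Function.Injective v)
    (hsurj : ∀ x : V, x = w ∨ ∃ i : Fin n, x = v i)
    (hpath : ∀ i j : Fin n, (G (!σ)).Adj (v i) (v j) ↔ (i.val + 1 = j.val ∨ j.val + 1 = i.val))
    (hvσ : ∀ i j : Fin n, ¬ (G σ).Adj (v i) (v j))
    (hwσ : ∀ i : Fin n, (G σ).Adj w (v i) ↔ (1 ≤ i.val ∧ i.val ≤ n - 2))
    (hwm : ∀ i : Fin n, ¬ (G (!σ)).Adj w (v i)) :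
    ¬ SignedEliminable G := by
  intro hG
  have : Nonempty V := ⟨w⟩
  obtain ⟨m, hm⟩ := hG.exists_signedSimplicial (sDisjoint_of_mountain hsurj hvσ hwm)
  rcases hsurj m with rfl | ⟨i, rfl⟩
  · exact not_signedSimplicial_apex hn hpath hwσ hwm hm
  · by_cases hi : 1 ≤ i.val ∧ i.val ≤ n - 2
    · exact not_signedSimplicial_of_inner hinj hpath hi hm
    · exact not_signedSimplicial_of_not_inner hn hpath hwσ hi hm

theorem statement_12 {V : Type*} (G : Bool → SimpleGraph V) (σ : Bool)
    (n : ℕ) (hn : 3 ≤ n) (v : Fin n → V) (w : V)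
    (hinj : Function.Injective v) (hw : ∀ i : Fin n, v i ≠ w)
    (hsurj : ∀ x : V, x = w ∨ ∃ i : Fin n, x = v i)
    (hpath : ∀ i j : Fin n, (G (!σ)).Adj (v i) (v j) ↔ (i.val + 1 = j.val ∨ j.val + 1 = i.val))
    (hvσ : ∀ i j : Fin n, ¬ (G σ).Adj (v i) (v j))
    (hwσ : ∀ i : Fin n, (G σ).Adj w (v i) ↔ (1 ≤ i.val ∧ i.val ≤ n - 2))
    (hwm : ∀ i : Fin n, ¬ (G (!σ)).Adj w (v i)) :
    ¬ SignedEliminable G :=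
  statement_12_general G σ n hn v w hinj hsurj hpath hvσ hwσ hwm
end

section
/- No σ-hill is signed-eliminable: for n ≥ 2, the signed graph on vertices v_1,...,v_n, w_1, w_2 with edges v_i v_{i+1} ∈ E_{-σ} (1 ≤ i ≤ n-1), w_1 w_2 ∈ E_σ, w_1 v_i ∈ E_σ (1 ≤ i ≤ n-1), w_2 v_i ∈ E_σ (2 ≤ i ≤ n), and no other edges, admits no signed elimination ordering. -/
/-!
Every other vertex precedes the last vertex `x` of a signed elimination ordering, so (E1) and
(E2) hold for all pairs of other vertices with `x` in the middle. Every vertex of a σ-hill breaks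
one of them, so none can come last (indices as in the paper, `v` in Lean starts at `0`):
`w₁` and `w₂` have the non-σ-adjacent σ-neighbours `w₂, v₁` and `w₁, vₙ`; an inner `vₖ` has the
non-(-σ)-adjacent (-σ)-neighbours `vₖ₋₁, vₖ₊₁`; and `w₂ ~σ v₂ ~₋σ v₁`, `w₁ ~σ vₙ₋₁ ~₋σ vₙ`,
while `w₂ ≁σ v₁` and `w₁ ≁σ vₙ`.
-/

open SimpleGraph

def IsLastIn {V : Type*} {m : ℕ} (ν : V ≃ Fin m) (x : V) : Prop :=
  ∀ y, y ≠ x → ν y < ν x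

theorem exists_isLastIn {V : Type*} [Nonempty V] {m : ℕ} (ν : V ≃ Fin m) :
    ∃ x, IsLastIn ν x := by
  have hm : 0 < m := (ν (Classical.arbitrary V)).pos
  refine ⟨ν.symm ⟨m - 1, by omega⟩, fun y hy => ?_⟩
  have hne : (ν y).val ≠ m - 1 := fun h => hy (ν.symm_apply_eq.mpr (Fin.ext h).symm).symm
  rw [Fin.lt_def, ν.apply_symm_apply]
  exact Nat.lt_of_le_of_ne (Nat.le_sub_one_of_lt (ν y).isLt) hne

namespace IsSEO

variable {V : Type*} {G : Bool → SimpleGraph V} {m : ℕ} {ν : V ≃ Fin m} {x : V}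

theorem adj_of_adj_last (h : IsSEO G ν) (hx : IsLastIn ν x) (τ : Bool) {u v : V}
    (huv : u ≠ v) (hu : (G τ).Adj u x) (hv : (G τ).Adj v x) : (G τ).Adj u v :=
  (h u v x huv (hx u hu.ne) (hx v hv.ne) τ).1 hu hv

theorem adj_last_of_adj (h : IsSEO G ν) (hx : IsLastIn ν x) (τ : Bool) {u v : V}
    (hux : u ≠ x) (huv : (G τ).Adj u v) (hv : (G (!τ)).Adj v x) : (G τ).Adj u x :=
  (h u v x huv.ne (hx u hux) (hx v hv.ne) τ).2 huv hv

end IsSEO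

section Hill

variable {V : Type*} {G : Bool → SimpleGraph V} {σ : Bool} {n : ℕ} {v : Fin n → V} {w₁ w₂ : V}
  {m : ℕ} {ν : V ≃ Fin m}

theorem hill_not_isLastIn_w₁ (h : IsSEO G ν) (hn : 2 ≤ n) (hw₂ : ∀ i, v i ≠ w₂)
    (hw12 : (G σ).Adj w₁ w₂) (hw1σ : ∀ i, (G σ).Adj w₁ (v i) ↔ i.val ≤ n - 2)
    (hw2σ : ∀ i, (G σ).Adj w₂ (v i) ↔ 1 ≤ i.val) : ¬ IsLastIn ν w₁ := fun hx => by
  have hadj := h.adj_of_adj_last hx σ (hw₂ ⟨0, by omega⟩).symm hw12.symm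
    ((hw1σ _).mpr (Nat.zero_le _)).symm
  simpa using (hw2σ _).mp hadj

theorem hill_not_isLastIn_w₂ (h : IsSEO G ν) (hn : 2 ≤ n) (hw₁ : ∀ i, v i ≠ w₁)
    (hw12 : (G σ).Adj w₁ w₂) (hw1σ : ∀ i, (G σ).Adj w₁ (v i) ↔ i.val ≤ n - 2)
    (hw2σ : ∀ i, (G σ).Adj w₂ (v i) ↔ 1 ≤ i.val) : ¬ IsLastIn ν w₂ := fun hx => by
  have hadj := h.adj_of_adj_last hx σ (hw₁ ⟨n - 1, by omega⟩).symm hw12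
    ((hw2σ _).mpr (show 1 ≤ n - 1 by omega)).symm
  have := (hw1σ _).mp hadj
  simp only at this
  omega

theorem hill_not_isLastIn_v_zero (h : IsSEO G ν) (hw₂ : ∀ i, v i ≠ w₂)
    (hpath : ∀ i j, (G (!σ)).Adj (v i) (v j) ↔ (i.val + 1 = j.val ∨ j.val + 1 = i.val))
    (hw2σ : ∀ i, (G σ).Adj w₂ (v i) ↔ 1 ≤ i.val) (i j : Fin n) (hi : i.val = 0)
    (hj : j.val = 1) : ¬ IsLastIn ν (v i) := fun hx => by
  have hadj := h.adj_last_of_adj hx σ (hw₂ i).symm ((hw2σ j).mpr hj.ge)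
    ((hpath j i).mpr (Or.inr (by omega)))
  have := (hw2σ i).mp hadj
  omega

theorem hill_not_isLastIn_v_last (h : IsSEO G ν) (hw₁ : ∀ i, v i ≠ w₁)
    (hpath : ∀ i j, (G (!σ)).Adj (v i) (v j) ↔ (i.val + 1 = j.val ∨ j.val + 1 = i.val))
    (hw1σ : ∀ i, (G σ).Adj w₁ (v i) ↔ i.val ≤ n - 2) (i j : Fin n) (hi : i.val = n - 1)
    (hj : j.val + 1 = i.val) : ¬ IsLastIn ν (v i) := fun hx => by
  have hadj := h.adj_last_of_adj hx σ (hw₁ i).symm ((hw1σ j).mpr (by omega))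
    ((hpath j i).mpr (Or.inl hj))
  have := (hw1σ i).mp hadj
  omega

theorem hill_not_isLastIn_v_inner (h : IsSEO G ν) (hinj : Function.Injective v)
    (hpath : ∀ i j, (G (!σ)).Adj (v i) (v j) ↔ (i.val + 1 = j.val ∨ j.val + 1 = i.val))
    (i j k : Fin n) (hj : j.val + 1 = i.val) (hk : i.val + 1 = k.val) :
    ¬ IsLastIn ν (v i) := fun hx => by
  have hadj := h.adj_of_adj_last hx (!σ) (hinj.ne (Fin.ne_of_val_ne (by omega)))
    ((hpath j i).mpr (Or.inl hj)) ((hpath k i).mpr (Or.inr hk))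
  have := (hpath j k).mp hadj
  omega

end Hill

theorem statement_13_general {V : Type*} (G : Bool → SimpleGraph V) (σ : Bool)
    (n : ℕ) (hn : 2 ≤ n) (v : Fin n → V) (w₁ w₂ : V)
    (hinj : Function.Injective v) (hw₁ : ∀ i : Fin n, v i ≠ w₁) (hw₂ : ∀ i : Fin n, v i ≠ w₂)
    (hsurj : ∀ x : V, x = w₁ ∨ x = w₂ ∨ ∃ i : Fin n, x = v i)
    (hpath : ∀ i j : Fin n, (G (!σ)).Adj (v i) (v j) ↔ (i.val + 1 = j.val ∨ j.val + 1 = i.val))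
    (hw12 : (G σ).Adj w₁ w₂)
    (hw1σ : ∀ i : Fin n, (G σ).Adj w₁ (v i) ↔ i.val ≤ n - 2)
    (hw2σ : ∀ i : Fin n, (G σ).Adj w₂ (v i) ↔ 1 ≤ i.val) :
    ¬ SignedEliminable G := by
  rintro ⟨m, ν, h⟩
  have : Nonempty V := ⟨w₁⟩
  obtain ⟨x, hx⟩ := exists_isLastIn ν
  rcases hsurj x with rfl | rfl | ⟨i, rfl⟩
  · exact hill_not_isLastIn_w₁ h hn hw₂ hw12 hw1σ hw2σ hx
  · exact hill_not_isLastIn_w₂ h hn hw₁ hw12 hw1σ hw2σ hx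
  obtain hi | hi | hi : i.val = 0 ∨ i.val = n - 1 ∨ 0 < i.val ∧ i.val < n - 1 := by omega
  · exact hill_not_isLastIn_v_zero h hw₂ hpath hw2σ i ⟨1, by omega⟩ hi rfl hx
  · exact hill_not_isLastIn_v_last h hw₁ hpath hw1σ i ⟨n - 2, by omega⟩ hi
      (by simp only; omega) hx
  · exact hill_not_isLastIn_v_inner h hinj hpath i ⟨i - 1, by omega⟩ ⟨i + 1, by omega⟩
      (by simp only; omega) rfl hx

theorem statement_13 {V : Type*} (G : Bool → SimpleGraph V) (σ : Bool)
    (n : ℕ) (hn : 2 ≤ n) (v : Fin n → V) (w₁ w₂ : V)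
    (hinj : Function.Injective v) (hw₁ : ∀ i : Fin n, v i ≠ w₁) (hw₂ : ∀ i : Fin n, v i ≠ w₂)
    (hww : w₁ ≠ w₂)
    (hsurj : ∀ x : V, x = w₁ ∨ x = w₂ ∨ ∃ i : Fin n, x = v i)
    (hpath : ∀ i j : Fin n, (G (!σ)).Adj (v i) (v j) ↔ (i.val + 1 = j.val ∨ j.val + 1 = i.val))
    (hvσ : ∀ i j : Fin n, ¬ (G σ).Adj (v i) (v j))
    (hw12 : (G σ).Adj w₁ w₂) (hw12m : ¬ (G (!σ)).Adj w₁ w₂)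
    (hw1σ : ∀ i : Fin n, (G σ).Adj w₁ (v i) ↔ i.val ≤ n - 2)
    (hw2σ : ∀ i : Fin n, (G σ).Adj w₂ (v i) ↔ 1 ≤ i.val)
    (hw1m : ∀ i : Fin n, ¬ (G (!σ)).Adj w₁ (v i))
    (hw2m : ∀ i : Fin n, ¬ (G (!σ)).Adj w₂ (v i)) :
    ¬ SignedEliminable G :=
  statement_13_general G σ n hn v w₁ w₂ hinj hw₁ hw₂ hsurj hpath hw12 hw1σ hw2σ
end

section
/- Let G be a signed-eliminable signed graph and u, v, w, x four distinct vertices with u ~_σ v, v ~_{-σ} w, w ~_σ x for some sign σ. Then u ~_σ x, and moreover either u ~_σ w or v ~_σ x. -/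
open SimpleGraph

/-!
Take a signed elimination ordering and look at the latest of the four vertices. If it is an inner
vertex of the path, say `w`, then (E2) on `u ~σ v ~(-σ) w` gives `u ~σ w`, and (E1) on the common
neighbour `w` of `u` and `x` gives `u ~σ x`. If it is an end vertex, say `x`, then (E2) twice along
the path gives `v ~(-σ) x` and `u ~σ x`, and (E1) on the common neighbour `x` gives `u ~σ w`. The
path read backwards has the same signs, so the latest vertex may be assumed to be `w` or `x`.
-/

namespace IsSEO

variable {V : Type*} {n : ℕ} {G : Bool → SimpleGraph V} {ν : V ≃ Fin n}

theorem adj_of_adj_of_adj (h : IsSEO G ν) {a b c : V} (hab : a ≠ b) (hac : ν a < ν c)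
    (hbc : ν b < ν c) {τ : Bool} (hac' : (G τ).Adj a c) (hbc' : (G τ).Adj b c) :
    (G τ).Adj a b :=
  (h a b c hab hac hbc τ).1 hac' hbc'

theorem adj_of_adj_of_adj_not (h : IsSEO G ν) {a b c : V} (hab : a ≠ b) (hac : ν a < ν c)
    (hbc : ν b < ν c) {τ : Bool} (hab' : (G τ).Adj a b) (hbc' : (G (!τ)).Adj b c) :
    (G τ).Adj a c :=
  (h a b c hab hac hbc τ).2 hab' hbc'

theorem adj_not_of_adj_not_of_adj (h : IsSEO G ν) {a b c : V} (hab : a ≠ b) (hac : ν a < ν c)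
    (hbc : ν b < ν c) {τ : Bool} (hab' : (G (!τ)).Adj a b) (hbc' : (G τ).Adj b c) :
    (G (!τ)).Adj a c :=
  h.adj_of_adj_of_adj_not hab hac hbc hab' (by rwa [Bool.not_not])

theorem path_of_max_at_third (h : IsSEO G ν) {σ : Bool} {u v w x : V} (huv : u ≠ v)
    (hux : u ≠ x) (hu : ν u < ν w) (hv : ν v < ν w) (hx : ν x < ν w)
    (h1 : (G σ).Adj u v) (h2 : (G (!σ)).Adj v w) (h3 : (G σ).Adj w x) :
    (G σ).Adj u x ∧ (G σ).Adj u w := by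
  have huw : (G σ).Adj u w := h.adj_of_adj_of_adj_not huv hu hv h1 h2
  exact ⟨h.adj_of_adj_of_adj hux hu hx huw h3.symm, huw⟩

theorem path_of_max_at_last (h : IsSEO G ν) {σ : Bool} {u v w x : V} (huv : u ≠ v)
    (huw : u ≠ w) (hvw : v ≠ w) (hu : ν u < ν x) (hv : ν v < ν x) (hw : ν w < ν x)
    (h1 : (G σ).Adj u v) (h2 : (G (!σ)).Adj v w) (h3 : (G σ).Adj w x) :
    (G σ).Adj u x ∧ (G σ).Adj u w := by
  have hvx : (G (!σ)).Adj v x := h.adj_not_of_adj_not_of_adj hvw hv hw h2 h3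
  have hux : (G σ).Adj u x := h.adj_of_adj_of_adj_not huv hu hv h1 hvx
  exact ⟨hux, h.adj_of_adj_of_adj huw hu hw hux h3⟩

theorem path_of_max_in_tail (h : IsSEO G ν) {σ : Bool} {u v w x : V} (huv : u ≠ v)
    (huw : u ≠ w) (hux : u ≠ x) (hvw : v ≠ w) (hwx : w ≠ x)
    (hu : ν u < max (ν w) (ν x)) (hv : ν v < max (ν w) (ν x))
    (h1 : (G σ).Adj u v) (h2 : (G (!σ)).Adj v w) (h3 : (G σ).Adj w x) :
    (G σ).Adj u x ∧ (G σ).Adj u w := by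
  rcases (ν.injective.ne hwx).lt_or_gt with hwx' | hxw'
  · rw [max_eq_right hwx'.le] at hu hv
    exact h.path_of_max_at_last huv huw hvw hu hv hwx' h1 h2 h3
  · rw [max_eq_left hxw'.le] at hu hv
    exact h.path_of_max_at_third huv hux hu hv hxw' h1 h2 h3

end IsSEO

theorem statement_14_general {V : Type*} (G : Bool → SimpleGraph V)
    (hSE : SignedEliminable G) (σ : Bool) (u v w x : V)
    (huv : u ≠ v) (huw : u ≠ w) (hux : u ≠ x) (hvw : v ≠ w) (hvx : v ≠ x) (hwx : w ≠ x)
    (h1 : (G σ).Adj u v) (h2 : (G (!σ)).Adj v w) (h3 : (G σ).Adj w x) :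
    (G σ).Adj u x ∧ ((G σ).Adj u w ∨ (G σ).Adj v x) := by
  obtain ⟨n, ν, hseo⟩ := hSE
  have hmax : max (ν u) (ν v) ≠ max (ν w) (ν x) := by
    rcases max_choice (ν u) (ν v) with h | h <;> rcases max_choice (ν w) (ν x) with h' | h' <;>
      rw [h, h'] <;> apply ν.injective.ne <;> assumption
  rcases hmax.lt_or_gt with htail | hhead
  · obtain ⟨hux', huw'⟩ := hseo.path_of_max_in_tail huv huw hux hvw hwx
      (le_max_left _ _ |>.trans_lt htail) (le_max_right _ _ |>.trans_lt htail) h1 h2 h3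
    exact ⟨hux', Or.inl huw'⟩
  · rw [max_comm (ν u)] at hhead
    obtain ⟨hxu, hxv⟩ := hseo.path_of_max_in_tail hwx.symm hvx.symm hux.symm hvw.symm huv.symm
      (le_max_right _ _ |>.trans_lt hhead) (le_max_left _ _ |>.trans_lt hhead)
      h3.symm (Bool.not_not σ ▸ h2.symm) h1.symm
    exact ⟨hxu.symm, Or.inr hxv.symm⟩

theorem statement_14 {V : Type*} (G : Bool → SimpleGraph V) (hdisj : SDisjoint G)
    (hSE : SignedEliminable G) (σ : Bool) (u v w x : V)
    (huv : u ≠ v) (huw : u ≠ w) (hux : u ≠ x) (hvw : v ≠ w) (hvx : v ≠ x) (hwx : w ≠ x)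
    (h1 : (G σ).Adj u v) (h2 : (G (!σ)).Adj v w) (h3 : (G σ).Adj w x) :
    (G σ).Adj u x ∧ ((G σ).Adj u w ∨ (G σ).Adj v x) :=
  statement_14_general G hSE σ u v w x huv huw hux hvw hvx hwx h1 h2 h3
end

section
/- Let G be a connected signed-eliminable signed graph with E_+ ≠ ∅ and E_- ≠ ∅. Then there exists a signed-simplicial vertex v of G with N_+(v) ≠ ∅ and N_-(v) ≠ ∅. -/
/-!
Call a vertex mixed if it has both a positive and a negative neighbour. Connectedness forces a
mixed vertex to exist: the vertices with a positive neighbour cannot be left along a positive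
edge, and leaving them along a negative edge starts at a mixed vertex. Take the mixed vertex `b`
that is latest in a signed elimination ordering. Condition (E2) shows that a neighbour of `b`
later than `b` would make `b`'s neighbour of the other sign, or that neighbour itself, a later
mixed vertex; so all neighbours of `b` come before it, and then (E1) and (E2) applied at `b`
give (S1) and (S2).
-/

open SimpleGraph

section SignedGraph

variable {V : Type*} {G : Bool → SimpleGraph V}

def IsMixed (G : Bool → SimpleGraph V) (v : V) : Prop :=
  ∀ σ : Bool, ∃ w, (G σ).Adj v w

lemma isMixed_of_adj_of_adj {σ : Bool} {v u w : V} (hu : (G σ).Adj v u) (hw : (G (!σ)).Adj v w) :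
    IsMixed G v := by
  intro τ
  cases σ <;> cases τ
  exacts [⟨u, hu⟩, ⟨w, hw⟩, ⟨w, hw⟩, ⟨u, hu⟩]

lemma SDisjoint.not_adj_of_adj (hdisj : SDisjoint G) {σ : Bool} {u v : V} (h : (G σ).Adj u v) :
    ¬ (G (!σ)).Adj u v := by
  cases σ
  exacts [fun h' => hdisj u v ⟨h', h⟩, fun h' => hdisj u v ⟨h, h'⟩]

lemma exists_isMixed_of_connected (hconn : ((G true) ⊔ (G false)).Connected)
    (hp : ∃ u v : V, (G true).Adj u v) (hm : ∃ u v : V, (G false).Adj u v) :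
    ∃ v, IsMixed G v := by
  obtain ⟨p, q, hpq⟩ := hp
  obtain ⟨m, m', hmm'⟩ := hm
  by_cases hmS : ∃ w, (G true).Adj m w
  · obtain ⟨w, hw⟩ := hmS
    exact ⟨m, isMixed_of_adj_of_adj (σ := true) hw hmm'⟩
  obtain ⟨walk⟩ := hconn.preconnected p m
  obtain ⟨⟨⟨x, y⟩, hxy⟩, -, ⟨z, hxz⟩, hyS⟩ :=
    walk.exists_boundary_dart {v | ∃ w, (G true).Adj v w} ⟨q, hpq⟩ hmS
  rcases hxy with hxy | hxy
  · exact absurd ⟨x, hxy.symm⟩ hyS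
  · exact ⟨x, isMixed_of_adj_of_adj (σ := true) hxz hxy⟩

namespace IsSEO

variable {n : ℕ} {ν : V ≃ Fin n}

lemma lt_of_adj_of_maximal_isMixed (hseo : IsSEO G ν) (hdisj : SDisjoint G) {b : V}
    (hb : IsMixed G b) (hmax : ∀ v, IsMixed G v → ν v ≤ ν b) {σ : Bool} {w : V}
    (hw : (G σ).Adj b w) : ν w < ν b := by
  by_contra! hwb
  have hbw : ν b < ν w := hwb.lt_of_ne fun h => hw.ne (ν.injective h)
  obtain ⟨c, hc⟩ := hb (!σ)
  rcases lt_trichotomy (ν c) (ν w) with hcw | hcw | hwc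
  · have hcw_adj : (G (!σ)).Adj c w :=
      (hseo c b w hc.ne.symm hcw hbw (!σ)).2 hc.symm (by simpa using hw)
    exact (hmax w (isMixed_of_adj_of_adj hw.symm hcw_adj.symm)).not_gt hbw
  · exact hdisj.not_adj_of_adj hw (ν.injective hcw ▸ hc)
  · have hwc_adj : (G σ).Adj w c := (hseo w b c hw.ne.symm hwc (hbw.trans hwc) σ).2 hw.symm hc
    exact (hmax c (isMixed_of_adj_of_adj hwc_adj.symm hc.symm)).not_gt (hbw.trans hwc)

lemma signedSimplicial_of_forall_adj_lt (hseo : IsSEO G ν) (hdisj : SDisjoint G) {b : V}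
    (hlt : ∀ σ w, (G σ).Adj b w → ν w < ν b) : SignedSimplicial G b := by
  refine ⟨fun σ => isClique_insert.2 ⟨?_, fun w hw _ => hw⟩, fun σ u w huw hwb => ?_⟩
  · intro x hx y hy hxy
    exact (hseo x y b hxy (hlt σ x hx) (hlt σ y hy) σ).1 hx.symm hy.symm
  have hwb' : ν w < ν b := hlt σ w hwb.symm
  rcases lt_trichotomy (ν u) (ν b) with hub | hub | hbu
  · exact (hseo u w b huw.ne hub hwb' (!σ)).2 huw (by simpa using hwb)
  · exact absurd (ν.injective hub ▸ huw) (hdisj.not_adj_of_adj hwb.symm)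
  · have hbu_adj : (G σ).Adj b u :=
      (hseo b w u hwb.ne.symm hbu (hwb'.trans hbu) σ).2 hwb.symm huw.symm
    exact absurd (hlt σ u hbu_adj) hbu.not_gt

end IsSEO

end SignedGraph

theorem statement_17_general {V : Type*} (G : Bool → SimpleGraph V) (hdisj : SDisjoint G)
    (hconn : ((G true) ⊔ (G false)).Connected) (hSE : SignedEliminable G)
    (hp : ∃ u v : V, (G true).Adj u v) (hm : ∃ u v : V, (G false).Adj u v) :
    ∃ v : V, SignedSimplicial G v ∧
      (∃ w : V, (G true).Adj v w) ∧ (∃ w : V, (G false).Adj v w) := by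
  obtain ⟨n, ν, hseo⟩ := hSE
  have : Finite V := .of_equiv _ ν.symm
  obtain ⟨b, hb, hmax⟩ := Set.exists_max_image {v | IsMixed G v} ν (Set.toFinite _)
    (exists_isMixed_of_connected hconn hp hm)
  have hlt : ∀ σ w, (G σ).Adj b w → ν w < ν b := fun _ _ hw =>
    hseo.lt_of_adj_of_maximal_isMixed hdisj hb hmax hw
  exact ⟨b, hseo.signedSimplicial_of_forall_adj_lt hdisj hlt, hb true, hb false⟩

theorem statement_17 {V : Type*} [Fintype V] (G : Bool → SimpleGraph V) (hdisj : SDisjoint G)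
    (hconn : ((G true) ⊔ (G false)).Connected) (hSE : SignedEliminable G)
    (hp : ∃ u v : V, (G true).Adj u v) (hm : ∃ u v : V, (G false).Adj u v) :
    ∃ v : V, SignedSimplicial G v ∧
      (∃ w : V, (G true).Adj v w) ∧ (∃ w : V, (G false).Adj v w) :=
  statement_17_general G hdisj hconn hSE hp hm
end

section
/- Let G be a signed graph whose underlying graph is complete. Then G is signed-eliminable if and only if for each sign σ, G_σ contains as an induced subgraph neither a path on four vertices nor a pair of two disjoint edges with no E_σ-edge between them (i.e. G_σ has no induced subgraph on 4 vertices isomorphic to P_4 or to 2K_2). -/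
/-!
As the underlying graph is complete, `G false` is the complement of `G true`, and a signed
elimination ordering is the same as a common perfect elimination ordering of `H := G true` and
of `Hᶜ`. Under such an ordering the last of any four vertices is simplicial in both `H` and `Hᶜ`
restricted to them; no vertex of `P₄` (whose complement is again a `P₄`, with the other two
vertices as ends) or of `2K₂` (whose complement is `C₄`) is.

Conversely, excluding `P₄` and `2K₂` in `H` and in `Hᶜ` makes `H` a threshold graph, so every
induced subgraph has an isolated or a dominating vertex: a vertex of maximum degree dominates
unless some vertex is isolated. Listing vertices in the order they are removed this way, each
vertex is adjacent to all or to none of the later ones, and such an order is a perfect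
elimination ordering of `H` and of `Hᶜ` alike.
-/

open SimpleGraph

namespace SimpleGraph

variable {V : Type*} (H : SimpleGraph V)

def HasInducedP4 : Prop :=
  ∃ a b c d : V, a ≠ b ∧ a ≠ c ∧ a ≠ d ∧ b ≠ c ∧ b ≠ d ∧ c ≠ d ∧
    H.Adj a b ∧ H.Adj b c ∧ H.Adj c d ∧ ¬ H.Adj a c ∧ ¬ H.Adj a d ∧ ¬ H.Adj b d

def HasInduced2K2 : Prop :=
  ∃ a b c d : V, a ≠ b ∧ a ≠ c ∧ a ≠ d ∧ b ≠ c ∧ b ≠ d ∧ c ≠ d ∧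
    H.Adj a b ∧ H.Adj c d ∧ ¬ H.Adj a c ∧ ¬ H.Adj a d ∧ ¬ H.Adj b c ∧ ¬ H.Adj b d

/-- Equivalent to excluding induced `P₄`, `2K₂` and `C₄`: the threshold graphs. -/
def IsThreshold : Prop :=
  ∀ a b c d : V, H.Adj a b → H.Adj c d → a ≠ c → b ≠ d → H.Adj a c ∨ H.Adj b d

variable {H}

theorem isThreshold_of_not_hasInduced (hP4 : ¬ H.HasInducedP4) (h2K2 : ¬ H.HasInduced2K2)
    (hC4 : ¬ Hᶜ.HasInduced2K2) : H.IsThreshold := by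
  intro a b c d hab hcd hac hbd
  by_contra! hn
  obtain ⟨hnac, hnbd⟩ := hn
  have had : a ≠ d := by rintro rfl; exact hnac hcd.symm
  have hbc : b ≠ c := by rintro rfl; exact hnac hab
  by_cases had' : H.Adj a d <;> by_cases hbc' : H.Adj b c
  · exact hC4 ⟨a, c, b, d, hac, hab.ne, had, hbc.symm, hcd.ne, hbd,
      (compl_adj H a c).2 ⟨hac, hnac⟩, (compl_adj H b d).2 ⟨hbd, hnbd⟩,
      fun h => h.2 hab, fun h => h.2 had', fun h => h.2 hbc'.symm, fun h => h.2 hcd⟩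
  · exact hP4 ⟨b, a, d, c, hab.ne.symm, hbd, hbc, had, hac, hcd.ne.symm,
      hab.symm, had', hcd.symm, hnbd, hbc', hnac⟩
  · exact hP4 ⟨a, b, c, d, hab.ne, hac, had, hbc, hbd, hcd.ne,
      hab, hbc', hcd, hnac, had', hnbd⟩
  · exact h2K2 ⟨a, b, c, d, hab.ne, hac, had, hbc, hbd, hcd.ne,
      hab, hcd, hnac, had', hbc', hnbd⟩

theorem IsThreshold.comap {W : Type*} {f : W → V} (hf : f.Injective) (hH : H.IsThreshold) :
    (H.comap f).IsThreshold :=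
  fun _ _ _ _ hab hcd hac hbd => hH _ _ _ _ hab hcd (hf.ne hac) (hf.ne hbd)

theorem exists_adj_not_adj_of_degree_le [Fintype V] [DecidableEq V] [DecidableRel H.Adj]
    {x y z : V} (hdeg : H.degree z ≤ H.degree x) (hzy : H.Adj z y) (hxy : ¬ H.Adj x y)
    (hyx : y ≠ x) :
    ∃ w, H.Adj x w ∧ w ≠ z ∧ ¬ H.Adj z w := by
  by_contra! hw
  have hsub : (H.neighborFinset x).erase z ⊂ (H.neighborFinset z).erase x := by
    refine Finset.ssubset_iff_of_subset (fun w hw' => ?_) |>.2 ⟨y, ?_, ?_⟩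
    · obtain ⟨hwz, hxw⟩ := Finset.mem_erase.1 hw'
      rw [mem_neighborFinset] at hxw
      exact Finset.mem_erase.2 ⟨hxw.ne.symm, (mem_neighborFinset _ _ _).2 (hw w hxw hwz)⟩
    · simpa [hyx] using hzy
    · simp [hxy]
  have hcard := Finset.card_lt_card hsub
  simp only [Finset.card_erase_eq_ite, mem_neighborFinset, card_neighborFinset_eq_degree,
    H.adj_comm x z] at hcard
  split_ifs at hcard <;> omega

theorem IsThreshold.exists_dominating_or_isolated [Fintype V] [Nonempty V]
    (hH : H.IsThreshold) : ∃ x, (∀ y, y ≠ x → H.Adj x y) ∨ ∀ y, ¬ H.Adj x y := by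
  classical
  obtain ⟨x, -, hmax⟩ :=
    Finset.exists_max_image Finset.univ (H.degree ·) Finset.univ_nonempty
  by_contra! hn
  obtain ⟨⟨y, hyx, hxy⟩, -⟩ := hn x
  obtain ⟨-, z, hyz⟩ := hn y
  obtain ⟨w, hxw, hwz, hzw⟩ :=
    exists_adj_not_adj_of_degree_le (hmax z (Finset.mem_univ z)) hyz.symm hxy hyx
  rcases hH x w y z hxw hyz hyx.symm hwz with h | h
  · exact hxy h
  · exact hzw h.symm

end SimpleGraph

section Ordering

variable {V : Type*} {n : ℕ}

/-- Read backwards, `ν` builds `H` by adding one isolated or dominating vertex at a time. -/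
def IsCreationOrder (H : SimpleGraph V) (ν : V ≃ Fin n) : Prop :=
  ∀ u, (∀ v, ν u < ν v → H.Adj u v) ∨ ∀ v, ν u < ν v → ¬ H.Adj u v

variable {H : SimpleGraph V} {ν : V ≃ Fin n}

theorem IsCreationOrder.compl (h : IsCreationOrder H ν) : IsCreationOrder Hᶜ ν := by
  intro u
  rcases h u with hdom | hiso
  · exact Or.inr fun v huv hc => hc.2 (hdom v huv)
  · exact Or.inl fun v huv => (compl_adj H u v).2 ⟨ne_of_apply_ne ν huv.ne, hiso v huv⟩

theorem IsCreationOrder.isPEO (h : IsCreationOrder H ν) : IsPEO H ν := by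
  intro u v w huv hu hv huw hvw
  rcases lt_or_gt_of_ne (ν.injective.ne huv) with huv' | hvu'
  · exact (h u).elim (fun hdom => hdom v huv') fun hiso => absurd huw (hiso w hu)
  · exact (h v).elim (fun hdom => (hdom u hvu').symm) fun hiso => absurd hvw (hiso w hv)

def consEquiv [DecidableEq V] (x : V) (ν : {y // y ≠ x} ≃ Fin n) : V ≃ Fin (n + 1) :=
  (Equiv.optionSubtypeNe x).symm.trans ((Equiv.optionCongr ν).trans (finSuccEquiv n).symm)

variable [DecidableEq V]

theorem consEquiv_self (x : V) (ν : {y // y ≠ x} ≃ Fin n) : consEquiv x ν x = 0 := by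
  simp [consEquiv]

theorem consEquiv_of_ne {x y : V} (ν : {y // y ≠ x} ≃ Fin n) (hy : y ≠ x) :
    consEquiv x ν y = (ν ⟨y, hy⟩).succ := by
  simp [consEquiv, Equiv.optionSubtypeNe_symm_of_ne hy]

theorem IsCreationOrder.cons {x : V} {ν : {y // y ≠ x} ≃ Fin n}
    (h : IsCreationOrder (H.comap Subtype.val) ν)
    (hx : (∀ y, y ≠ x → H.Adj x y) ∨ ∀ y, ¬ H.Adj x y) :
    IsCreationOrder H (consEquiv x ν) := by
  intro u
  have hne : ∀ v, consEquiv x ν u < consEquiv x ν v → v ≠ x := by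
    intro v huv hvx
    rw [hvx, consEquiv_self] at huv
    exact Fin.not_lt_zero _ huv
  by_cases hu : u = x
  · subst u
    exact hx.imp (fun hdom v huv => hdom v (hne v huv)) fun hiso v _ => hiso v
  · have hlt :
        ∀ v (hv : consEquiv x ν u < consEquiv x ν v), ν ⟨u, hu⟩ < ν ⟨v, hne v hv⟩ :=
      fun v hv => by
        have hvx := hne v hv
        rwa [consEquiv_of_ne ν hu, consEquiv_of_ne ν hvx, Fin.succ_lt_succ_iff] at hv
    exact (h ⟨u, hu⟩).imp (fun hdom v hv => hdom ⟨v, hne v hv⟩ (hlt v hv))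
      fun hiso v hv => hiso ⟨v, hne v hv⟩ (hlt v hv)

end Ordering

theorem SimpleGraph.IsThreshold.exists_isCreationOrder {V : Type*} [Fintype V]
    {H : SimpleGraph V} (hH : H.IsThreshold) :
    ∃ ν : V ≃ Fin (Fintype.card V), IsCreationOrder H ν := by
  classical
  induction h : Fintype.card V generalizing V with
  | zero =>
    have := Fintype.card_eq_zero_iff.mp h
    exact ⟨Equiv.equivOfIsEmpty _ _, fun u => isEmptyElim u⟩
  | succ n ih =>
    have : Nonempty V := Fintype.card_pos_iff.mp (by omega)
    obtain ⟨x, hx⟩ := hH.exists_dominating_or_isolated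
    have hcard : Fintype.card {y // y ≠ x} = n := by
      have := Fintype.card_congr (Equiv.optionSubtypeNe x)
      rw [Fintype.card_option] at this
      omega
    obtain ⟨ν, hν⟩ := ih (hH.comap Subtype.val_injective) hcard
    exact ⟨consEquiv x ν, hν.cons hx⟩

section Signed

variable {V : Type*} {n : ℕ}

theorem exists_mem_forall_ne_lt (ν : V ≃ Fin n) {s : Finset V} (hs : s.Nonempty) :
    ∃ w ∈ s, ∀ x ∈ s, x ≠ w → ν x < ν w := by
  obtain ⟨w, hw, hmax⟩ := s.exists_max_image ν hs
  exact ⟨w, hw, fun x hx hxw => (hmax x hx).lt_of_ne (ν.injective.ne hxw)⟩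

variable {H : SimpleGraph V} {ν : V ≃ Fin n}

theorem not_adj_of_isPEO_compl (hc : IsPEO Hᶜ ν) {u v w : V} (huv : u ≠ v) (hu : ν u < ν w)
    (hv : ν v < ν w) (huw : ¬ H.Adj u w) (hvw : ¬ H.Adj v w) : ¬ H.Adj u v :=
  ((hc u v w huv hu hv ((compl_adj H u w).2 ⟨ne_of_apply_ne ν hu.ne, huw⟩)
    ((compl_adj H v w).2 ⟨ne_of_apply_ne ν hv.ne, hvw⟩))).2

theorem not_hasInducedP4_of_isPEO (h : IsPEO H ν) (hc : IsPEO Hᶜ ν) : ¬ H.HasInducedP4 := by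
  classical
  rintro ⟨a, b, c, d, hab, hac, had, hbc, hbd, hcd, hab', hbc', hcd', hnac, hnad, hnbd⟩
  obtain ⟨w, hw, hmax⟩ := exists_mem_forall_ne_lt ν (s := {a, b, c, d}) (by simp)
  simp only [Finset.mem_insert, Finset.mem_singleton] at hw
  rcases hw with rfl | rfl | rfl | rfl
  · exact not_adj_of_isPEO_compl hc hcd (hmax c (by simp) hac.symm) (hmax d (by simp) had.symm)
      (fun h => hnac h.symm) (fun h => hnad h.symm) hcd'
  · exact hnac (h a c w hac (hmax a (by simp) hab) (hmax c (by simp) hbc.symm) hab' hbc'.symm)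
  · exact hnbd (h b d w hbd (hmax b (by simp) hbc) (hmax d (by simp) hcd.symm) hbc' hcd'.symm)
  · exact not_adj_of_isPEO_compl hc hab (hmax a (by simp) had) (hmax b (by simp) hbd)
      hnad hnbd hab'

theorem not_hasInduced2K2_of_isPEO_compl (hc : IsPEO Hᶜ ν) : ¬ H.HasInduced2K2 := by
  classical
  rintro ⟨a, b, c, d, hab, hac, had, hbc, hbd, hcd, hab', hcd', hnac, hnad, hnbc, hnbd⟩
  obtain ⟨w, hw, hmax⟩ := exists_mem_forall_ne_lt ν (s := {a, b, c, d}) (by simp)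
  simp only [Finset.mem_insert, Finset.mem_singleton] at hw
  rcases hw with rfl | rfl | rfl | rfl
  · exact not_adj_of_isPEO_compl hc hcd (hmax c (by simp) hac.symm) (hmax d (by simp) had.symm)
      (fun h => hnac h.symm) (fun h => hnad h.symm) hcd'
  · exact not_adj_of_isPEO_compl hc hcd (hmax c (by simp) hbc.symm) (hmax d (by simp) hbd.symm)
      (fun h => hnbc h.symm) (fun h => hnbd h.symm) hcd'
  · exact not_adj_of_isPEO_compl hc hab (hmax a (by simp) hac) (hmax b (by simp) hbc)
      hnac hnbc hab'
  · exact not_adj_of_isPEO_compl hc hab (hmax a (by simp) had) (hmax b (by simp) hbd)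
      hnad hnbd hab'

variable {G : Bool → SimpleGraph V}

theorem compl_eq_of_sDisjoint (hdisj : SDisjoint G)
    (hcomplete : ∀ u v : V, u ≠ v → (G true).Adj u v ∨ (G false).Adj u v) (σ : Bool) :
    G (!σ) = (G σ)ᶜ := by
  ext u v
  rw [compl_adj]
  cases σ
  · exact ⟨fun h => ⟨h.ne, fun h' => hdisj u v ⟨h, h'⟩⟩,
      fun ⟨hne, h⟩ => (hcomplete u v hne).resolve_right h⟩
  · exact ⟨fun h => ⟨h.ne, fun h' => hdisj u v ⟨h', h⟩⟩,
      fun ⟨hne, h⟩ => (hcomplete u v hne).resolve_left h⟩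

/-- When the two signs are complementary, (E2) for `σ` is (E1) for `!σ`. -/
theorem isSEO_iff_forall_isPEO (hcompl : ∀ σ, G (!σ) = (G σ)ᶜ) :
    IsSEO G ν ↔ ∀ σ, IsPEO (G σ) ν := by
  refine ⟨fun h σ u v w huv hu hv => (h u v w huv hu hv σ).1,
    fun h u v w huv hu hv σ => ⟨h σ u v w huv hu hv, fun huv' hvw => ?_⟩⟩
  by_contra huw
  have huw' : (G (!σ)).Adj u w := by
    rw [hcompl]
    exact ⟨ne_of_apply_ne ν hu.ne, huw⟩
  have hnuv := h (!σ) u v w huv hu hv huw' hvw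
  rw [hcompl] at hnuv
  exact hnuv.2 huv'

end Signed

theorem statement_19 {V : Type*} [Fintype V] (G : Bool → SimpleGraph V) (hdisj : SDisjoint G)
    (hcomplete : ∀ u v : V, u ≠ v → (G true).Adj u v ∨ (G false).Adj u v) :
    SignedEliminable G ↔
      ∀ σ : Bool,
        (¬ ∃ a b c d : V, a ≠ b ∧ a ≠ c ∧ a ≠ d ∧ b ≠ c ∧ b ≠ d ∧ c ≠ d ∧
          (G σ).Adj a b ∧ (G σ).Adj b c ∧ (G σ).Adj c d ∧
          ¬ (G σ).Adj a c ∧ ¬ (G σ).Adj a d ∧ ¬ (G σ).Adj b d) ∧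
        (¬ ∃ a b c d : V, a ≠ b ∧ a ≠ c ∧ a ≠ d ∧ b ≠ c ∧ b ≠ d ∧ c ≠ d ∧
          (G σ).Adj a b ∧ (G σ).Adj c d ∧
          ¬ (G σ).Adj a c ∧ ¬ (G σ).Adj a d ∧ ¬ (G σ).Adj b c ∧ ¬ (G σ).Adj b d) := by
  have hcompl := compl_eq_of_sDisjoint hdisj hcomplete
  constructor
  · rintro ⟨n, ν, hν⟩ σ
    have hPEO := (isSEO_iff_forall_isPEO hcompl).1 hν
    have hPEOc : IsPEO (G σ)ᶜ ν := hcompl σ ▸ hPEO (!σ)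
    exact ⟨not_hasInducedP4_of_isPEO (hPEO σ) hPEOc, not_hasInduced2K2_of_isPEO_compl hPEOc⟩
  · intro hfree
    have hfalse : G false = (G true)ᶜ := hcompl true
    have hthr : (G true).IsThreshold := isThreshold_of_not_hasInduced (hfree true).1
      (hfree true).2 (hfalse ▸ (hfree false).2)
    obtain ⟨ν, hν⟩ := hthr.exists_isCreationOrder
    refine ⟨_, ν, (isSEO_iff_forall_isPEO hcompl).2 fun σ => ?_⟩
    cases σ
    · rw [hfalse]
      exact hν.compl.isPEO
    · exact hν.isPEO
end
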